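/- arXiv:1909.05324 — 8 statements merged into one kernel-verified Lean document; each statement's English description precedes it below -/
import Mathlib

section
/- If $\mathcal{F}$ is a shellable family of $n$ subsets of $[n]$ (i.e., there is an ordering $F_1,\dots,F_n$ of the members such that $|F_1\cup\cdots\cup F_k|=k$ for all $k\in[n]$), then there exists an element $k\in[n]$ that belongs to exactly one member of $\mathcal{F}$. -/
open Finset Function

/-- An ordering `F 0, F 1, …` of a family is a shelling if every initial union
has cardinality equal to its length. -/
def IsShelling {n m : ℕ} (F : Fin m → Finset (Fin n)) : Prop :=
  ∀ k : Fin m, ((Finset.univ.filter fun i => i ≤ k).biUnion F).card = (k : ℕ) + 1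

/-- A family is shellable if some reordering of it is a shelling. -/
def Shellable {n m : ℕ} (F : Fin m → Finset (Fin n)) : Prop :=
  ∃ π : Equiv.Perm (Fin m), IsShelling (F ∘ π)

theorem stmt_0 {n : ℕ} (hn : 0 < n) (F : Fin n → Finset (Fin n))
    (hF : Shellable F) :
    ∃ k : Fin n, (Finset.univ.filter fun i => k ∈ F i).card = 1 := by
  obtain ⟨π, hπ⟩ := hF
  let L : Fin n := ⟨n - 1, by omega⟩
  have hLe : ∀ j : Fin n, j ≤ L := by
    intro j
    have := j.isLt
    simp only [Fin.le_def, L]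
    omega
  have hTcard : (Finset.univ.biUnion (F ∘ π)).card = n := by
    have h := hπ L
    have hfil : (Finset.univ.filter fun i => i ≤ L) = Finset.univ := by
      ext j; simp [hLe j]
    rw [hfil] at h
    rw [h]
    simp only [L]
    omega
  have hScard : ((Finset.univ.filter fun i => i < L).biUnion (F ∘ π)).card = n - 1 := by
    rcases Nat.eq_or_lt_of_le hn with h1 | h2
    · have he : (Finset.univ.filter fun i : Fin n => i < L) = ∅ := by
        ext j
        have := j.isLt
        simp only [Finset.mem_filter, Finset.mem_univ, true_and, Fin.lt_def, L,
          Finset.notMem_empty, iff_false]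
        omega
      rw [he]; simp; omega
    · have h := hπ (⟨n - 2, by omega⟩ : Fin n)
      have hfil : (Finset.univ.filter fun i => i ≤ (⟨n - 2, by omega⟩ : Fin n)) =
          (Finset.univ.filter fun i => i < L) := by
        ext j
        simp only [Finset.mem_filter, Finset.mem_univ, true_and, Fin.le_def, Fin.lt_def, L]
        omega
      rw [hfil] at h
      rw [h]
      simp only
      omega
  have hsub : ((Finset.univ.filter fun i => i < L).biUnion (F ∘ π)) ⊆
      Finset.univ.biUnion (F ∘ π) := by
    intro x hx
    rw [Finset.mem_biUnion] at hx
    obtain ⟨j, _, hxj⟩ := hx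
    exact Finset.mem_biUnion.mpr ⟨j, Finset.mem_univ j, hxj⟩
  have hss : ((Finset.univ.filter fun i => i < L).biUnion (F ∘ π)) ⊂
      Finset.univ.biUnion (F ∘ π) := ⟨hsub, fun h => by
    have := Finset.card_le_card h
    omega⟩
  obtain ⟨x, hxT, hxS⟩ := Finset.exists_of_ssubset hss
  refine ⟨x, ?_⟩
  rw [Finset.card_eq_one]
  refine ⟨π L, ?_⟩
  ext i
  simp only [Finset.mem_filter, Finset.mem_univ, true_and, Finset.mem_singleton]
  constructor
  · intro hxi
    by_contra hne
    have hx' : x ∈ (F ∘ π) (π.symm i) := by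
      simpa using hxi
    have hlt : π.symm i < L := by
      rcases lt_or_eq_of_le (hLe (π.symm i)) with h | h
      · exact h
      · exact absurd (by rw [← h, Equiv.apply_symm_apply]) hne
    exact hxS (Finset.mem_biUnion.mpr ⟨π.symm i, by simp [hlt], hx'⟩)
  · rintro rfl
    rw [Finset.mem_biUnion] at hxT
    obtain ⟨j, _, hxj⟩ := hxT
    rcases lt_or_eq_of_le (hLe j) with h | h
    · exact absurd (Finset.mem_biUnion.mpr ⟨j, by simp [h], hxj⟩) hxS
    · subst h; simpa using hxj
end

section
/- If a finite family $\mathcal{F}$ of subsets of $[n]$ (indexed by $[m]$) has exactly one transversal, then $\mathcal{F}$ is shellable: there is an ordering $F_{\pi(1)},\dots,F_{\pi(m)}$ with $|F_{\pi(1)}\cup\cdots\cup F_{\pi(k)}|=k$ for every $k\in[m]$. -/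
open Finset Function

lemma exists_singleton_of_unique {n m : ℕ} (F : Fin (m+1) → Finset (Fin n))
    (t : Fin (m+1) → Fin n) (htinj : Function.Injective t) (htmem : ∀ i, t i ∈ F i)
    (huniq : ∀ u : Fin (m+1) → Fin n,
      (Function.Injective u ∧ ∀ i, u i ∈ F i) → u = t) :
    ∃ i, F i = {t i} := by
  classical
  by_contra h
  push_neg at h
  have hs : ∀ i, ∃ x ∈ F i, x ≠ t i := by
    intro i
    by_contra hc
    push_neg at hc
    exact h i (Finset.eq_singleton_iff_unique_mem.2 ⟨htmem i, hc⟩)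
  choose s hsmem hsne using hs
  by_cases hr : ∀ i, ∃ j, t j = s i
  · choose σ hσ using hr
    have hσne : ∀ i, σ i ≠ i := fun i he => hsne i (by rw [← hσ i, he])
    -- find a periodic point of σ
    obtain ⟨a, b, hab, he⟩ : ∃ a b : Fin (m+2), a ≠ b ∧ σ^[(a:ℕ)] 0 = σ^[(b:ℕ)] 0 := by
      obtain ⟨a, b, hab, he⟩ := Fintype.exists_ne_map_eq_of_card_lt
        (fun k : Fin (m+2) => σ^[(k:ℕ)] 0) (by simp)
      exact ⟨a, b, hab, he⟩
    wlog hlt : (a : ℕ) < (b : ℕ) generalizing a b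
    · have hne : (a:ℕ) ≠ (b:ℕ) := fun hv => hab (Fin.val_injective hv)
      exact this b a hab.symm he.symm (by omega)
    set y : Fin (m+1) := σ^[(a:ℕ)] 0 with hy
    set p : ℕ := (b:ℕ) - (a:ℕ) with hp
    have hppos : 0 < p := by omega
    have hyper : σ^[p] y = y := by
      have : σ^[p + (a:ℕ)] 0 = σ^[(a:ℕ)] 0 := by
        rw [show p + (a:ℕ) = (b:ℕ) by omega]; exact he.symm
      rwa [Function.iterate_add_apply] at this
    set C : Set (Fin (m+1)) := {z | ∃ j < p, σ^[j] y = z} with hC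
    have hyC : y ∈ C := ⟨0, hppos, rfl⟩
    have hstep : ∀ j, σ (σ^[j] y) = σ^[j+1] y :=
      fun j => (Function.iterate_succ_apply' σ j y).symm
    have hmaps : Set.MapsTo σ C C := by
      rintro z ⟨j, hj, rfl⟩
      rcases eq_or_lt_of_le (Nat.succ_le_of_lt hj) with hj1 | hj1
      · refine ⟨0, hppos, ?_⟩
        have h2 : σ (σ^[j] y) = y := by
          rw [hstep j, show j + 1 = p from hj1, hyper]
        simp [h2]
      · exact ⟨j + 1, hj1, (hstep j).symm⟩
    have hsurj : Set.SurjOn σ C C := by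
      rintro z ⟨j, hj, rfl⟩
      rcases Nat.eq_zero_or_pos j with rfl | hjpos
      · refine ⟨σ^[p-1] y, ⟨p-1, by omega, rfl⟩, ?_⟩
        have h2 : σ (σ^[p-1] y) = y := by
          rw [hstep (p-1), show p - 1 + 1 = p by omega, hyper]
        simp [h2]
      · exact ⟨σ^[j-1] y, ⟨j - 1, by omega, rfl⟩, by
          rw [hstep (j-1), show j - 1 + 1 = j by omega]⟩
    have hinjC : Set.InjOn σ C :=
      (((Set.toFinite C).surjOn_iff_bijOn_of_mapsTo hmaps).1 hsurj).injOn
    set t' : Fin (m+1) → Fin n := fun j => if j ∈ C then t (σ j) else t j with ht'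
    have ht'inj : Function.Injective t' := by
      intro x z hxz
      simp only [ht'] at hxz
      by_cases hx : x ∈ C <;> by_cases hz : z ∈ C <;> simp [hx, hz] at hxz
      · exact hinjC hx hz (htinj hxz)
      · exact absurd (htinj hxz ▸ hmaps hx) hz
      · exact absurd ((htinj hxz).symm ▸ hmaps hz) hx
      · exact htinj hxz
    have ht'mem : ∀ j, t' j ∈ F j := by
      intro j
      simp only [ht']
      split
      · rw [hσ j]; exact hsmem j
      · exact htmem j
    have := congrFun (huniq t' ⟨ht'inj, ht'mem⟩) y
    simp only [ht', if_pos hyC] at this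
    exact hσne y (htinj this)
  · push_neg at hr
    obtain ⟨i, hi⟩ := hr
    set t' : Fin (m+1) → Fin n := Function.update t i (s i) with ht'
    have ht'inj : Function.Injective t' := by
      intro x z hxz
      simp only [ht', Function.update_apply] at hxz
      by_cases hx : x = i <;> by_cases hz : z = i <;> simp [hx, hz] at hxz
      · exact hx.trans hz.symm
      · exact absurd hxz.symm (hi z)
      · exact absurd hxz (hi x)
      · exact htinj hxz
    have ht'mem : ∀ j, t' j ∈ F j := by
      intro j
      simp only [ht', Function.update_apply]
      split
      · next hj => rw [hj]; exact hsmem i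
      · exact htmem j
    have := congrFun (huniq t' ⟨ht'inj, ht'mem⟩) i
    simp only [ht', Function.update_self] at this
    exact hsne i this

lemma shellable_aux {n : ℕ} : ∀ m (F : Fin m → Finset (Fin n)),
    (∃! t : Fin m → Fin n, Function.Injective t ∧ ∀ i, t i ∈ F i) → Shellable F := by
  intro m
  induction m with
  | zero => exact fun F _ => ⟨Equiv.refl _, fun k => k.elim0⟩
  | succ m ih =>
    intro F hF
    classical
    obtain ⟨t, ⟨htinj, htmem⟩, huniq⟩ := hF
    obtain ⟨i, hi⟩ := exists_singleton_of_unique F t htinj htmem fun u hu => huniq u hu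
    set G : Fin m → Finset (Fin n) := fun j => (F (i.succAbove j)).erase (t i) with hG
    have htG : ∀ j, t (i.succAbove j) ∈ G j := fun j =>
      Finset.mem_erase.2 ⟨fun he => Fin.succAbove_ne i j (htinj he), htmem _⟩
    have hGuniq : ∃! u : Fin m → Fin n, Function.Injective u ∧ ∀ j, u j ∈ G j := by
      refine ⟨fun j => t (i.succAbove j),
        ⟨htinj.comp Fin.succAbove_right_injective, htG⟩, ?_⟩
      rintro u ⟨huinj, humem⟩
      have hune : ∀ j, u j ≠ t i := fun j => (Finset.mem_erase.1 (humem j)).1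
      set U : Fin (m+1) → Fin n := i.insertNth (t i) u with hU
      have hUinj : Function.Injective U := by
        intro x z hxz
        rcases eq_or_ne x i with hx | hx
        · rcases eq_or_ne z i with hz | hz
          · rw [hx, hz]
          · obtain ⟨w, hw⟩ := Fin.exists_succAbove_eq hz
            rw [hx, ← hw, hU, Fin.insertNth_apply_same,
              Fin.insertNth_apply_succAbove] at hxz
            exact absurd hxz.symm (hune w)
        · obtain ⟨w, hw⟩ := Fin.exists_succAbove_eq hx
          rcases eq_or_ne z i with hz | hz
          · rw [hz, ← hw, hU, Fin.insertNth_apply_same,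
              Fin.insertNth_apply_succAbove] at hxz
            exact absurd hxz (hune w)
          · obtain ⟨w', hw'⟩ := Fin.exists_succAbove_eq hz
            rw [← hw, ← hw', hU, Fin.insertNth_apply_succAbove,
              Fin.insertNth_apply_succAbove] at hxz
            rw [← hw, ← hw', huinj hxz]
      have hUmem : ∀ k, U k ∈ F k := by
        intro k
        rcases eq_or_ne k i with hk | hk
        · rw [hk, hU, Fin.insertNth_apply_same, hi]; exact Finset.mem_singleton_self _
        · obtain ⟨w, hw⟩ := Fin.exists_succAbove_eq hk
          rw [← hw, hU, Fin.insertNth_apply_succAbove]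
          exact Finset.mem_of_mem_erase (humem w)
      have hUt : U = t := huniq U ⟨hUinj, hUmem⟩
      funext j
      have := congrFun hUt (i.succAbove j)
      rwa [hU, Fin.insertNth_apply_succAbove] at this
    obtain ⟨π', hπ'⟩ := ih G hGuniq
    set π : Equiv.Perm (Fin (m+1)) :=
      (finSuccEquiv m).trans ((Equiv.optionCongr π').trans (finSuccEquiv' i).symm) with hπ
    have hπ0 : π 0 = i := by
      simp [hπ, finSuccEquiv_zero]
    have hπs : ∀ j : Fin m, π j.succ = i.succAbove (π' j) := by
      intro j; simp [hπ, finSuccEquiv_succ]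
    refine ⟨π, ?_⟩
    intro k
    induction k using Fin.cases with
    | zero =>
      have hfil : (Finset.univ.filter fun l : Fin (m+1) => l ≤ 0) = {0} := by
        ext l; simp [Fin.le_zero_iff]
      rw [hfil]
      simp [hπ0, hi]
    | succ j =>
      have hfil : (Finset.univ.filter fun l : Fin (m+1) => l ≤ j.succ)
          = insert (0 : Fin (m+1))
            ((Finset.univ.filter fun l : Fin m => l ≤ j).image Fin.succ) := by
        ext l
        simp only [Finset.mem_filter, Finset.mem_univ, true_and, Finset.mem_insert,
          Finset.mem_image]
        induction l using Fin.cases with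
        | zero => simp [Fin.zero_le]
        | succ l' =>
          simp only [Fin.succ_le_succ_iff]
          constructor
          · intro hl; exact Or.inr ⟨l', hl, rfl⟩
          · rintro (hl | ⟨w, hw, hwe⟩)
            · exact absurd hl (Fin.succ_ne_zero l')
            · exact (Fin.succ_injective _ hwe) ▸ hw
      rw [hfil, Finset.biUnion_insert, Finset.image_biUnion]
      have hTG : ∀ l : Fin m, (F ∘ π) (Fin.succ l) = (G ∘ π') l ∪ {t i} ∨
          (F ∘ π) (Fin.succ l) = (G ∘ π') l := by
        intro l
        simp only [comp_apply, hπs, hG]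
        by_cases hti : t i ∈ F (i.succAbove (π' l))
        · left; ext x; simp only [Finset.mem_union, Finset.mem_erase, Finset.mem_singleton]
          constructor
          · intro hx; by_cases hxe : x = t i
            · exact Or.inr hxe
            · exact Or.inl ⟨hxe, hx⟩
          · rintro (⟨_, hx⟩ | rfl)
            · exact hx
            · exact hti
        · right; ext x; simp only [Finset.mem_erase]
          constructor
          · intro hx; exact ⟨fun he => hti (he ▸ hx), hx⟩
          · exact fun hx => hx.2
      set T : Finset (Fin n) := (Finset.univ.filter fun l : Fin m => l ≤ j).biUnion (G ∘ π')
        with hT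
      have htiT : t i ∉ T := by
        intro hmem
        obtain ⟨l, -, hl⟩ := Finset.mem_biUnion.1 hmem
        simp only [comp_apply, hG] at hl
        exact (Finset.mem_erase.1 hl).1 rfl
      have hU : (F ∘ π) 0 ∪ (Finset.univ.filter fun l : Fin m => l ≤ j).biUnion
          (fun l => (F ∘ π) (Fin.succ l)) = insert (t i) T := by
        apply Finset.Subset.antisymm
        · intro x hx
          rcases Finset.mem_union.1 hx with hx | hx
          · simp only [comp_apply, hπ0, hi, Finset.mem_singleton] at hx
            exact hx ▸ Finset.mem_insert_self _ _
          · obtain ⟨l, hl, hxl⟩ := Finset.mem_biUnion.1 hx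
            rcases hTG l with he | he
            · rw [he, Finset.mem_union] at hxl
              rcases hxl with hxl | hxl
              · exact Finset.mem_insert_of_mem (Finset.mem_biUnion.2 ⟨l, hl, hxl⟩)
              · exact (Finset.mem_singleton.1 hxl) ▸ Finset.mem_insert_self _ _
            · rw [he] at hxl
              exact Finset.mem_insert_of_mem (Finset.mem_biUnion.2 ⟨l, hl, hxl⟩)
        · intro x hx
          rcases Finset.mem_insert.1 hx with rfl | hx
          · exact Finset.mem_union_left _ (by simp [hπ0, hi])
          · obtain ⟨l, hl, hxl⟩ := Finset.mem_biUnion.1 hx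
            refine Finset.mem_union_right _ (Finset.mem_biUnion.2 ⟨l, hl, ?_⟩)
            rcases hTG l with he | he
            · rw [he]; exact Finset.mem_union_left _ hxl
            · rw [he]; exact hxl
      rw [hU, Finset.card_insert_of_notMem htiT, hπ' j]
      simp [Fin.val_succ]

theorem stmt_3 {n m : ℕ} (F : Fin m → Finset (Fin n))
    (hF : ∃! t : Fin m → Fin n, Function.Injective t ∧ ∀ i, t i ∈ F i) :
    Shellable F := by
  exact shellable_aux m F hF
end

section
/- Let $\mathcal{F}$ be a family of $n$ subsets of $[n]$ satisfying the marriage condition, with transversal $t$, and suppose that for the configuration $f_1$ defined by $f_1(t(F))=|F|$ for all $F\in\mathcal{F}$ there exists a surjective map $\sigma:[n]\to[m]$ (for some $m\le n$) satisfying $f_1$ (i.e., $\sigma(t(F))$ is the $|F|$-th smallest element of $\sigma(F)$ for every $F$). Then $\mathcal{F}$ is shellable. -/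
open Finset Function

/-- `σ (t i)` is the `f (t i)`-th smallest element of the image `σ(F i)`,
for every index `i`. -/
def Satisfies {n m m' : ℕ} (F : Fin m → Finset (Fin n)) (t : Fin m → Fin n)
    (σ : Fin n → Fin m') (f : Fin n → ℕ) : Prop :=
  ∀ i, (((F i).image σ).filter fun y => y ≤ σ (t i)).card = f (t i)

theorem stmt_6 {n m : ℕ} (hm : m ≤ n) (F : Fin n → Finset (Fin n))
    (hHall : ∀ I : Finset (Fin n), I.card ≤ (I.biUnion F).card)
    (t : Fin n → Fin n) (ht_inj : Function.Injective t) (ht_mem : ∀ i, t i ∈ F i)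
    (f₁ : Fin n → ℕ) (hf₁ : ∀ i, f₁ (t i) = (F i).card)
    (σ : Fin n → Fin m) (hσ : Function.Surjective σ)
    (hsat : Satisfies F t σ f₁) :
    Shellable F := by
  classical
  set w : Fin n → Fin m := σ ∘ t with hw
  -- key facts from `hsat`
  have himg : ∀ i, ((F i).image σ).filter (fun y => y ≤ σ (t i)) = (F i).image σ ∧
      ((F i).image σ).card = (F i).card := by
    intro i
    have h1 := hsat i
    rw [hf₁ i] at h1
    have h2 : ((F i).image σ).card ≤ (F i).card := Finset.card_image_le
    have h3 : (((F i).image σ).filter (fun y => y ≤ σ (t i))).card ≤ ((F i).image σ).card :=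
      Finset.card_filter_le _ _
    constructor
    · exact Finset.eq_of_subset_of_card_le (Finset.filter_subset _ _) (by omega)
    · omega
  have hle : ∀ i, ∀ x ∈ F i, σ x ≤ σ (t i) := by
    intro i x hx
    have := (himg i).1
    have hmem : σ x ∈ ((F i).image σ).filter (fun y => y ≤ σ (t i)) := by
      rw [this]; exact Finset.mem_image_of_mem σ hx
    exact (Finset.mem_filter.mp hmem).2
  have hinj : ∀ i, Set.InjOn σ (F i) := by
    intro i
    exact (Finset.card_image_iff).mp (himg i).2
  refine ⟨Tuple.sort w, ?_⟩
  set π := Tuple.sort w with hπ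
  have hmono : Monotone (w ∘ π) := Tuple.monotone_sort w
  have htbij : Function.Bijective t := Finite.injective_iff_bijective.mp ht_inj
  intro k
  have hset : ((Finset.univ.filter fun i => i ≤ k).biUnion (F ∘ π)) =
      (Finset.univ.filter fun i => i ≤ k).image (t ∘ π) := by
    ext x
    simp only [Finset.mem_biUnion, Finset.mem_image, Finset.mem_filter, Finset.mem_univ,
      true_and, Function.comp_apply]
    constructor
    · rintro ⟨j, hj, hx⟩
      by_cases hxe : x = t (π j)
      · exact ⟨j, hj, hxe.symm⟩
      · have hlt : σ x < σ (t (π j)) :=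
          lt_of_le_of_ne (hle _ _ hx)
            (fun h => hxe (hinj (π j) (Finset.mem_coe.mpr hx)
              (Finset.mem_coe.mpr (ht_mem (π j))) h))
        obtain ⟨i', rfl⟩ := htbij.surjective x
        obtain ⟨j', rfl⟩ := π.surjective i'
        refine ⟨j', ?_, rfl⟩
        by_contra h
        push_neg at h
        have hle' : w (π j) ≤ w (π j') := hmono (le_of_lt (lt_of_le_of_lt hj h))
        simp only [hw, Function.comp_apply] at hle'
        exact absurd hle' (not_le.mpr hlt)
    · rintro ⟨j, hj, rfl⟩
      exact ⟨j, hj, ht_mem _⟩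
  rw [hset, Finset.card_image_of_injective _ (ht_inj.comp π.injective)]
  have : (Finset.univ.filter fun i => i ≤ k) = Finset.Iic k := by
    ext i; simp
  rw [this, Fin.card_Iic]
end

section
/- Let $\mathcal{F}$ be a shellable family of $n$ subsets of $[n]$ with (unique) transversal $t$. Then for every configuration $f$ of $t$, there exists a permutation $\sigma:[n]\to[n]$ such that for every member $F$ of $\mathcal{F}$, $\sigma(t(F))$ is the $f(t(F))$-th smallest element of $\sigma(F)$. -/
open Finset Function

/-- Pick a rational avoiding a finite set `B` such that exactly `c` elements
of `A` lie strictly below it. -/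
lemma pick_lemma (A B : Finset ℚ) (c : ℕ) (hc : c ≤ A.card) :
    ∃ q, q ∉ B ∧ (A.filter (fun a => a < q)).card = c := by
  classical
  set l := A.sort (· ≤ ·) with hl
  have hnd : l.Nodup := A.sort_nodup _
  have hsort : l.Pairwise (· ≤ ·) := A.pairwise_sort _
  have hlen : l.length = A.card := A.length_sort _
  set A₁ := (l.take c).toFinset with hA₁
  set A₂ := (l.drop c).toFinset with hA₂
  have hmemA : ∀ a : ℚ, a ∈ A ↔ a ∈ l := fun a => (Finset.mem_sort _).symm
  have hkey : ∀ a ∈ A₁, ∀ b ∈ A₂, a < b := by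
    intro a ha b hb
    rw [hA₁, List.mem_toFinset] at ha
    rw [hA₂, List.mem_toFinset] at hb
    have hle : a ≤ b := hsort.rel_of_mem_take_of_mem_drop ha hb
    have hne : a ≠ b := by
      intro h; subst h
      exact (List.disjoint_take_drop hnd le_rfl) ha hb
    exact lt_of_le_of_ne hle hne
  have hA₁card : A₁.card = c := by
    rw [hA₁, List.toFinset_card_of_nodup (hnd.sublist (List.take_sublist _ _)),
      List.length_take, hlen]
    exact min_eq_left hc
  set S : Set ℚ := {q | (∀ a ∈ A₁, a < q) ∧ ∀ b ∈ A₂, q < b} with hS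
  have hSinf : S.Infinite := by
    by_cases h₁ : A₁.Nonempty
    · by_cases h₂ : A₂.Nonempty
      · have hab : A₁.max' h₁ < A₂.min' h₂ :=
          hkey _ (A₁.max'_mem h₁) _ (A₂.min'_mem h₂)
        refine (Set.Ioo_infinite hab).mono ?_
        rintro q ⟨hq1, hq2⟩
        exact ⟨fun a ha => lt_of_le_of_lt (A₁.le_max' a ha) hq1,
          fun b hb => lt_of_lt_of_le hq2 (A₂.min'_le b hb)⟩
      · refine (Set.Ioi_infinite (A₁.max' h₁)).mono ?_
        intro q hq
        exact ⟨fun a ha => lt_of_le_of_lt (A₁.le_max' a ha) hq,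
          fun b hb => absurd ⟨b, hb⟩ h₂⟩
    · by_cases h₂ : A₂.Nonempty
      · refine (Set.Iio_infinite (A₂.min' h₂)).mono ?_
        intro q hq
        exact ⟨fun a ha => absurd ⟨a, ha⟩ h₁,
          fun b hb => lt_of_lt_of_le hq (A₂.min'_le b hb)⟩
      · refine Set.infinite_univ.mono ?_
        intro q _
        exact ⟨fun a ha => absurd ⟨a, ha⟩ h₁, fun b hb => absurd ⟨b, hb⟩ h₂⟩
  obtain ⟨q, hqS, hqB⟩ := (hSinf.diff B.finite_toSet).nonempty
  refine ⟨q, by simpa using hqB, ?_⟩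
  have hfilt : A.filter (fun a => a < q) = A₁ := by
    ext a
    simp only [Finset.mem_filter]
    constructor
    · rintro ⟨haA, haq⟩
      rw [hmemA] at haA
      rw [← List.take_append_drop c l, List.mem_append] at haA
      rcases haA with h | h
      · rwa [hA₁, List.mem_toFinset]
      · exact absurd haq (not_lt.2 (le_of_lt (hqS.2 a (by rw [hA₂, List.mem_toFinset]; exact h))))
    · intro ha
      refine ⟨?_, hqS.1 a ha⟩
      rw [hA₁, List.mem_toFinset] at ha
      rw [hmemA]
      exact List.mem_of_mem_take ha
  rw [hfilt, hA₁card]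

/-- From an injective map to `ℚ`, produce a bijection of `Fin n` preserving order
comparisons with `r`. -/
lemma exists_rank {n : ℕ} (r : Fin n → ℚ) (hr : Function.Injective r) :
    ∃ σ : Fin n → Fin n, Function.Bijective σ ∧ ∀ w z, (σ w ≤ σ z ↔ r w ≤ r z) := by
  classical
  have hcard : (Finset.univ.image r).card = n := by
    rw [Finset.card_image_of_injective _ hr, Finset.card_univ, Fintype.card_fin]
  set iso := (Finset.univ.image r).orderIsoOfFin hcard with hiso
  set σ : Fin n → Fin n := fun z =>
    iso.symm ⟨r z, Finset.mem_image_of_mem r (Finset.mem_univ z)⟩ with hσ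
  have hinj : Function.Injective σ := by
    intro a b h
    apply hr
    have := iso.symm.injective h
    exact Subtype.ext_iff.1 this
  refine ⟨σ, Finite.injective_iff_bijective.1 hinj, ?_⟩
  intro w z
  rw [hσ]
  rw [iso.symm.le_iff_le]
  exact Subtype.mk_le_mk

theorem stmt_7 {n : ℕ} (F : Fin n → Finset (Fin n)) (hF : Shellable F)
    (t : Fin n → Fin n) (ht_inj : Function.Injective t) (ht_mem : ∀ i, t i ∈ F i)
    (f : Fin n → ℕ) (hf : ∀ i, 1 ≤ f (t i) ∧ f (t i) ≤ (F i).card) :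
    ∃ σ : Fin n → Fin n, Function.Bijective σ ∧ Satisfies F t σ f := by
  classical
  obtain ⟨π, hπ⟩ := hF
  set G : Fin n → Finset (Fin n) := F ∘ π with hG
  set x : Fin n → Fin n := t ∘ π with hx
  have hxinj : Function.Injective x := ht_inj.comp π.injective
  have hxmem : ∀ k, x k ∈ G k := fun k => ht_mem (π k)
  have hfilter : ∀ k : Fin n, (Finset.univ.filter fun i => i ≤ k) = Finset.Iic k := by
    intro k; ext j; simp
  have himg : ∀ k : Fin n, G k ⊆ (Finset.Iic k).image x := by
    intro k
    have hsub : (Finset.Iic k).image x ⊆ (Finset.Iic k).biUnion G := by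
      intro z hz
      obtain ⟨j, hj, rfl⟩ := Finset.mem_image.1 hz
      exact Finset.mem_biUnion.2 ⟨j, hj, hxmem j⟩
    have hcard : ((Finset.Iic k).biUnion G).card ≤ ((Finset.Iic k).image x).card := by
      rw [Finset.card_image_of_injective _ hxinj, Fin.card_Iic]
      have h1 := hπ k
      rw [hfilter] at h1
      rw [h1]
    have heq : (Finset.Iic k).image x = (Finset.Iic k).biUnion G :=
      Finset.eq_of_subset_of_card_le hsub hcard
    intro z hz
    rw [heq]
    exact Finset.mem_biUnion.2 ⟨k, Finset.mem_Iic.2 le_rfl, hz⟩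
  -- Build values v by induction
  have hmain : ∀ K : ℕ, ∃ v : Fin n → ℚ,
      (∀ j₁ j₂ : Fin n, (j₁ : ℕ) < K → (j₂ : ℕ) < K → v j₁ = v j₂ → j₁ = j₂) ∧
      ∀ k : Fin n, (k : ℕ) < K →
        ((Finset.Iic k).filter fun j => x j ∈ G k ∧ v j ≤ v k).card = f (x k) := by
    intro K
    induction K with
    | zero =>
      exact ⟨fun _ => 0, fun j₁ j₂ h => absurd h (Nat.not_lt_zero _),
        fun k h => absurd h (Nat.not_lt_zero _)⟩
    | succ K ih =>
      obtain ⟨v, hvinj, hvcount⟩ := ih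
      by_cases hK : K < n
      · set k : Fin n := ⟨K, hK⟩ with hkdef
        set T := (Finset.Iio k).filter fun j => x j ∈ G k with hT
        have hTimg : T.image x = (G k).erase (x k) := by
          ext z
          constructor
          · intro hz
            obtain ⟨j, hj, rfl⟩ := Finset.mem_image.1 hz
            rw [hT, Finset.mem_filter, Finset.mem_Iio] at hj
            exact Finset.mem_erase.2 ⟨fun h => absurd (hxinj h) (ne_of_lt hj.1), hj.2⟩
          · intro hz
            obtain ⟨hne, hzG⟩ := Finset.mem_erase.1 hz
            obtain ⟨j, hj, rfl⟩ := Finset.mem_image.1 (himg k hzG)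
            refine Finset.mem_image.2 ⟨j, ?_, rfl⟩
            rw [hT, Finset.mem_filter, Finset.mem_Iio]
            refine ⟨lt_of_le_of_ne (Finset.mem_Iic.1 hj) fun h => hne (congrArg x h), hzG⟩
        have hTcard : T.card = (G k).card - 1 := by
          rw [← Finset.card_image_of_injective T hxinj, hTimg,
            Finset.card_erase_of_mem (hxmem k)]
        have hTlt : ∀ j ∈ T, (j : ℕ) < K := by
          intro j hj
          rw [hT, Finset.mem_filter, Finset.mem_Iio] at hj
          exact hj.1
        set A := T.image v with hA
        have hAcard : A.card = T.card := Finset.card_image_of_injOn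
          (fun j hj j' hj' h => hvinj j j' (hTlt j hj) (hTlt j' hj') h)
        have hc : f (x k) - 1 ≤ A.card := by
          rw [hAcard, hTcard]
          exact Nat.sub_le_sub_right ((hf (π k)).2) 1
        obtain ⟨q, hqB, hqc⟩ := pick_lemma A ((Finset.Iio k).image v) _ hc
        set v' := Function.update v k q with hv'
        have hne' : ∀ j : Fin n, (j : ℕ) < K → j ≠ k := by
          intro j hj h
          rw [h, hkdef] at hj
          exact lt_irrefl K hj
        have hvv' : ∀ j : Fin n, (j : ℕ) < K → v' j = v j := fun j hj =>
          Function.update_of_ne (hne' j hj) q v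
        have hv'k : v' k = q := Function.update_self k q v
        have hqold : ∀ j : Fin n, (j : ℕ) < K → v j ≠ q := by
          intro j hj h
          exact hqB (Finset.mem_image.2 ⟨j, Finset.mem_Iio.2
            (show j < k from hj), h ▸ rfl⟩)
        refine ⟨v', ?_, ?_⟩
        · intro j₁ j₂ h₁ h₂ h
          rcases Nat.lt_succ_iff_lt_or_eq.1 h₁ with h₁' | h₁' <;>
            rcases Nat.lt_succ_iff_lt_or_eq.1 h₂ with h₂' | h₂'
          · exact hvinj j₁ j₂ h₁' h₂' (by rwa [hvv' j₁ h₁', hvv' j₂ h₂'] at h)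
          · have hj₂ : j₂ = k := Fin.ext h₂'
            rw [hvv' j₁ h₁', hj₂, hv'k] at h
            exact absurd h (hqold j₁ h₁')
          · have hj₁ : j₁ = k := Fin.ext h₁'
            rw [hvv' j₂ h₂', hj₁, hv'k] at h
            exact absurd h.symm (hqold j₂ h₂')
          · exact Fin.ext (h₁'.trans h₂'.symm)
        · intro k' hk'
          rcases Nat.lt_succ_iff_lt_or_eq.1 hk' with hk'' | hk''
          · have : ((Finset.Iic k').filter fun j => x j ∈ G k' ∧ v' j ≤ v' k') =
                ((Finset.Iic k').filter fun j => x j ∈ G k' ∧ v j ≤ v k') := by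
              apply Finset.filter_congr
              intro j hj
              have hjK : (j : ℕ) < K := lt_of_le_of_lt (Fin.le_def.1 (Finset.mem_Iic.1 hj)) hk''
              rw [hvv' j hjK, hvv' k' hk'']
            rw [this]
            exact hvcount k' hk''
          · have hkk : k' = k := Fin.ext hk''
            rw [hkk]
            rw [← Finset.Iio_insert, Finset.filter_insert,
              if_pos ⟨hxmem k, le_refl (v' k)⟩]
            have hnotmem : k ∉ (Finset.Iio k).filter
                fun j => x j ∈ G k ∧ v' j ≤ v' k := fun h =>
              absurd (Finset.mem_Iio.1 (Finset.mem_of_mem_filter _ h)) (lt_irrefl k)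
            rw [Finset.card_insert_of_notMem hnotmem]
            have hstep : ((Finset.Iio k).filter fun j => x j ∈ G k ∧ v' j ≤ v' k) =
                T.filter fun j => v j < q := by
              rw [hT, Finset.filter_filter]
              apply Finset.filter_congr
              intro j hj
              have hjK : (j : ℕ) < K := Fin.lt_def.1 (Finset.mem_Iio.1 hj)
              rw [hvv' j hjK, hv'k]
              constructor
              · rintro ⟨h1, h2⟩
                exact ⟨h1, lt_of_le_of_ne h2 (hqold j hjK)⟩
              · rintro ⟨h1, h2⟩
                exact ⟨h1, le_of_lt h2⟩
            rw [hstep]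
            have himgfilt : (T.filter fun j => v j < q).image v =
                A.filter fun a => a < q := by
              rw [hA, Finset.filter_image]
            have hcnt : (T.filter fun j => v j < q).card = (A.filter fun a => a < q).card := by
              rw [← himgfilt]
              exact (Finset.card_image_of_injOn fun j hj j' hj' h =>
                hvinj j j' (hTlt j (Finset.mem_of_mem_filter _ hj))
                  (hTlt j' (Finset.mem_of_mem_filter _ hj')) h).symm
            rw [hcnt, hqc]
            have hf1 : 1 ≤ f (x k) := (hf (π k)).1
            omega
      · refine ⟨v, ?_, ?_⟩
        · intro j₁ j₂ _ _ h
          exact hvinj j₁ j₂ (lt_of_lt_of_le j₁.isLt (le_of_not_gt hK))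
            (lt_of_lt_of_le j₂.isLt (le_of_not_gt hK)) h
        · intro k _
          exact hvcount k (lt_of_lt_of_le k.isLt (le_of_not_gt hK))
  obtain ⟨v, hvinj, hvcount⟩ := hmain n
  have hvInj : Function.Injective v := fun a b h => hvinj a b a.isLt b.isLt h
  have hxbij : Function.Bijective x := Finite.injective_iff_bijective.1 hxinj
  set e := Equiv.ofBijective x hxbij with he
  set r : Fin n → ℚ := fun z => v (e.symm z) with hr
  have hre : ∀ j, r (x j) = v j := by
    intro j
    have : e.symm (x j) = j := by
      apply e.injective
      rw [Equiv.apply_symm_apply]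
      rfl
    rw [hr]; simp only []; rw [this]
  have hrinj : Function.Injective r := hvInj.comp e.symm.injective
  obtain ⟨σ, hσbij, hσle⟩ := exists_rank r hrinj
  refine ⟨σ, hσbij, ?_⟩
  intro i
  set k := π.symm i with hk
  have hFi : F i = G k := by rw [hG]; simp [hk]
  have hti : t i = x k := by rw [hx]; simp [hk]
  have h1 : (((F i).image σ).filter fun y => y ≤ σ (t i)) =
      ((F i).filter fun z => σ z ≤ σ (t i)).image σ := Finset.filter_image
  rw [h1, Finset.card_image_of_injective _ hσbij.injective]
  have h2 : ((F i).filter fun z => σ z ≤ σ (t i)) =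
      ((F i).filter fun z => r z ≤ r (t i)) :=
    Finset.filter_congr fun z _ => by rw [hσle]
  rw [h2, hFi, hti]
  have h3 : ((G k).filter fun z => r z ≤ r (x k)) =
      ((Finset.Iic k).filter fun j => x j ∈ G k ∧ v j ≤ v k).image x := by
    ext z
    constructor
    · intro hz
      obtain ⟨hzG, hzr⟩ := Finset.mem_filter.1 hz
      obtain ⟨j, hj, rfl⟩ := Finset.mem_image.1 (himg k hzG)
      refine Finset.mem_image.2 ⟨j, Finset.mem_filter.2 ⟨hj, hzG, ?_⟩, rfl⟩
      rwa [hre j, hre k] at hzr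
    · intro hz
      obtain ⟨j, hj, rfl⟩ := Finset.mem_image.1 hz
      obtain ⟨_, hjG, hjv⟩ := Finset.mem_filter.1 hj
      exact Finset.mem_filter.2 ⟨hjG, by rwa [hre j, hre k]⟩
  rw [h3, Finset.card_image_of_injective _ hxinj]
  exact hvcount k k.isLt
end

section
/- Let $\mathcal{F}$ be a shellable family of $n$ subsets of $[n]$ with transversal $t$, let $S$ be the set of $k\in[n]$ contained in exactly one member of $\mathcal{F}$, and let $m$ satisfy $n-|S|+1\le m\le n$. Then for every configuration $f$ of $t$, there exists a surjective map $\sigma:[n]\to[m]$ such that for every member $F$, $\sigma(t(F))$ is the $f(t(F))$-th smallest element of $\sigma(F)$. -/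
/-!
Reorder the family along its shelling. Then every set `F k` consists of its transversal element
and transversal elements of earlier sets, so `σ` can be built set by set with rational labels,
choosing the label of `t k` so that it gets the prescribed rank among the already fixed labels
of `F k`. Normally `t k` gets a new label, distinct from all earlier ones. An element of `S`
lies in no later set, so it may instead take the `f`-th smallest of the other labels of `F k`
(when it is not to be the largest in `F k`), or the common top label `1` (when it is).
This saves one label per element of the first kind and one less than their number for those of
the second kind; as `n - m < #S`, exactly `n - m` labels can be saved, and compressing the
remaining `m` labels monotonically onto `Fin m` gives `σ`.
-/

open Finset Function

namespace Finset

variable {α : Type*} [LinearOrder α]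

theorem card_filter_le_insert_self (s : Finset α) (x : α) :
    #{y ∈ insert x s | y ≤ x} = #{y ∈ s | y < x} + 1 := by
  have : {y ∈ insert x s | y ≤ x} = insert x {y ∈ s | y < x} := by
    ext y
    simp only [mem_filter, mem_insert, le_iff_lt_or_eq]
    grind
  rw [this, card_insert_of_notMem (by simp)]

theorem exists_mem_card_filter_lt_eq (s : Finset α) {i : ℕ} (hi : i < #s) :
    ∃ x ∈ s, #{y ∈ s | y < x} = i := by
  induction s using Finset.induction_on_max generalizing i with
  | empty => simp at hi
  | insert a s ha ih =>
    have has : a ∉ s := fun h => lt_irrefl a (ha a h)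
    rw [card_insert_of_notMem has] at hi
    rcases (Nat.lt_succ_iff.mp hi).lt_or_eq with hi | rfl
    · obtain ⟨x, hx, rfl⟩ := ih hi
      refine ⟨x, mem_insert_of_mem hx, ?_⟩
      rw [filter_insert, if_neg (ha x hx).not_gt]
    · refine ⟨a, mem_insert_self a s, ?_⟩
      rw [filter_insert, if_neg (lt_irrefl a), filter_true_of_mem ha]

theorem exists_notMem_card_filter_lt_eq [DenselyOrdered α] {a b : α} (hab : a < b)
    (s P : Finset α) (hs : ∀ y ∈ s, y ∈ Set.Ioo a b) {i : ℕ} (hi : i ≤ #s) :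
    ∃ x ∈ Set.Ioo a b, x ∉ P ∧ #{y ∈ s | y < x} = i := by
  induction s using Finset.induction_on_max generalizing b i with
  | empty =>
    obtain ⟨x, hx, hxP⟩ := (Set.Ioo_infinite hab).exists_notMem_finset P
    exact ⟨x, hx, hxP, by simp_all⟩
  | insert c s hc ih =>
    have hcs : c ∉ s := fun h => lt_irrefl c (hc c h)
    have hcab := hs c (mem_insert_self c s)
    rw [card_insert_of_notMem hcs] at hi
    rcases hi.lt_or_eq with hi | rfl
    · obtain ⟨x, hx, hxP, rfl⟩ := ih hcab.1
        (fun y hy => ⟨(hs y (mem_insert_of_mem hy)).1, hc y hy⟩) (Nat.lt_succ_iff.mp hi)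
      refine ⟨x, ⟨hx.1, hx.2.trans hcab.2⟩, hxP, ?_⟩
      rw [filter_insert, if_neg (not_lt.mpr hx.2.le)]
    · obtain ⟨x, hx, hxP⟩ := (Set.Ioo_infinite hcab.2).exists_notMem_finset P
      refine ⟨x, ⟨hcab.1.trans hx.1, hx.2⟩, hxP, ?_⟩
      rw [filter_insert, if_pos hx.1, filter_true_of_mem fun y hy => (hc y hy).trans hx.1,
        card_insert_of_notMem hcs]

theorem exists_subsets_card_add_eq {β : Type*} (X Y : Finset β) {d : ℕ}
    (h : d + 1 ≤ #X + #Y) :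
    ∃ A ⊆ X, ∃ B ⊆ Y, (B = ∅ ∧ #A = d) ∨ (B.Nonempty ∧ #A + #B = d + 1) := by
  by_cases hd : d ≤ #X
  · obtain ⟨A, hAX, hA⟩ := exists_subset_card_eq hd
    exact ⟨A, hAX, ∅, empty_subset Y, Or.inl ⟨rfl, hA⟩⟩
  · obtain ⟨B, hBY, hB⟩ := exists_subset_card_eq (show d + 1 - #X ≤ #Y by omega)
    refine ⟨X, subset_rfl, B, hBY, Or.inr ⟨?_, by omega⟩⟩
    rw [← card_pos, hB]
    omega

end Finset

theorem StrictMono.card_filter_le_image {α β : Type*} [LinearOrder α] [LinearOrder β]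
    {ψ : α → β} (hψ : StrictMono ψ) (s : Finset α) (a : α) :
    #{z ∈ s.image ψ | z ≤ ψ a} = #{z ∈ s | z ≤ a} := by
  rw [filter_image, card_image_of_injective _ hψ.injective]
  simp only [hψ.le_iff_le]

theorem exists_surjective_fin_card_filter_le_image {ι α : Type*} [Fintype ι] [LinearOrder α]
    (G : ι → α) {m : ℕ} (hG : #(univ.image G) = m) :
    ∃ σ : ι → Fin m, Surjective σ ∧
      ∀ (s : Finset ι) (x : ι), #{z ∈ s.image σ | z ≤ σ x} = #{z ∈ s.image G | z ≤ G x} := by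
  set e := (univ.image G).orderIsoOfFin hG
  let G' : ι → univ.image G := fun y => ⟨G y, mem_image_of_mem G (mem_univ y)⟩
  refine ⟨e.symm ∘ G', fun i => ?_, fun s x => ?_⟩
  · obtain ⟨y, -, hy⟩ := mem_image.mp (e i).2
    exact ⟨y, e.symm_apply_eq.mpr (Subtype.ext hy)⟩
  · have hG' : (s.image G').image Subtype.val = s.image G := by rw [image_image]; rfl
    have hval : StrictMono (Subtype.val : univ.image G → α) := fun _ _ h => h
    rw [← image_image, comp_apply, e.symm.strictMono.card_filter_le_image, ← hG',
      show G x = (G' x : α) from rfl, hval.card_filter_le_image]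

theorem IsShelling.subset_image_Iic {n m : ℕ} {F : Fin m → Finset (Fin n)} (hF : IsShelling F)
    {t : Fin m → Fin n} (ht_inj : Injective t) (ht_mem : ∀ i, t i ∈ F i) (k : Fin m) :
    F k ⊆ (Iic k).image t := by
  have hunion : (Iic k).image t = (Iic k).biUnion F := by
    refine eq_of_subset_of_card_le (fun y hy => ?_) ?_
    · obtain ⟨i, hi, rfl⟩ := mem_image.mp hy
      exact mem_biUnion.mpr ⟨i, hi, ht_mem i⟩
    · rw [card_image_of_injective _ ht_inj, Fin.card_Iic, ← hF k, filter_ge_eq_Iic]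
  rw [hunion]
  exact subset_biUnion_of_mem F (mem_Iic.mpr le_rfl)

section RankLabel

variable {n : ℕ} (F : Fin n → Finset (Fin n)) (f : Fin n → ℕ) (A B : Finset (Fin n))

structure IsRankLabel (G : Fin n → ℚ) (j : Fin n) : Prop where
  rank : #{y ∈ (F j).image G | y ≤ G j} = f j
  fresh : j ∉ A → j ∉ B → G j ∈ Set.Ioo 0 1 ∧ ∀ i < j, G i ≠ G j
  merged : j ∈ A → ∃ i < j, i ∉ A ∧ i ∉ B ∧ G j = G i
  top : j ∈ B → G j = 1

variable {F f A B} {G : Fin n → ℚ}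

theorem IsRankLabel.congr (hle : ∀ k, ∀ j ∈ F k, j ≤ k) {G' : Fin n → ℚ} {j : Fin n}
    (h : IsRankLabel F f A B G j) (hG' : ∀ i ≤ j, G' i = G i) : IsRankLabel F f A B G' j where
  rank := by
    rw [image_congr fun i hi => hG' i (hle j i hi), hG' j le_rfl]
    exact h.rank
  fresh hjA hjB := by
    obtain ⟨h01, hne⟩ := h.fresh hjA hjB
    refine ⟨hG' j le_rfl ▸ h01, fun i hij => ?_⟩
    rw [hG' i hij.le, hG' j le_rfl]
    exact hne i hij
  merged hjA := by
    obtain ⟨i, hij, hiA, hiB, heq⟩ := h.merged hjA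
    exact ⟨i, hij, hiA, hiB, by rw [hG' j le_rfl, hG' i hij.le, heq]⟩
  top hjB := by rw [hG' j le_rfl, h.top hjB]

theorem injOn_of_isRankLabel {s : Finset (Fin n)}
    (hs : ∀ j ∈ s, IsRankLabel F f A B G j ∧ j ∉ A ∧ j ∉ B) : Set.InjOn G s := by
  intro i hi j hj heq
  by_contra hne
  rcases lt_or_gt_of_ne hne with hij | hji
  · obtain ⟨hj, hjA, hjB⟩ := hs j hj
    exact (hj.fresh hjA hjB).2 i hij heq
  · obtain ⟨hi, hiA, hiB⟩ := hs i hi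
    exact (hi.fresh hiA hiB).2 j hji heq.symm

theorem mem_erase_lt_and_notMem (hle : ∀ k, ∀ j ∈ F k, j ≤ k)
    (hpriv : ∀ k ∈ A ∪ B, ∀ j, k ∈ F j → j = k) {i k : Fin n} (hi : i ∈ (F k).erase k) :
    i < k ∧ i ∉ A ∧ i ∉ B := by
  obtain ⟨hik, hiF⟩ := mem_erase.mp hi
  have hAB : i ∉ A ∪ B := fun h => hik (hpriv i h k hiF).symm
  exact ⟨lt_of_le_of_ne (hle k i hiF) hik, fun h => hAB (mem_union_left B h),
    fun h => hAB (mem_union_right A h)⟩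

theorem card_filter_le_image_update (hmem : ∀ k, k ∈ F k) (k : Fin n) (x : ℚ) :
    #{y ∈ (F k).image (update G k x) | y ≤ update G k x k}
      = #{w ∈ ((F k).erase k).image G | w < x} + 1 := by
  have himage : (F k).image (update G k x) = insert x (((F k).erase k).image G) := by
    calc (F k).image (update G k x)
        = (insert k ((F k).erase k)).image (update G k x) := by rw [insert_erase (hmem k)]
      _ = insert x (((F k).erase k).image G) := by
        rw [image_insert, update_self]
        exact congrArg _ (image_congr fun i hi => update_of_ne (ne_of_mem_erase hi) _ _)
  rw [himage, update_self, card_filter_le_insert_self]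

theorem mem_Ioo_of_mem_image_erase (hle : ∀ k, ∀ j ∈ F k, j ≤ k)
    (hpriv : ∀ k ∈ A ∪ B, ∀ j, k ∈ F j → j = k) {k : Fin n}
    (hG : ∀ j < k, IsRankLabel F f A B G j) {w : ℚ} (hw : w ∈ ((F k).erase k).image G) :
    w ∈ Set.Ioo 0 1 := by
  obtain ⟨i, hi, rfl⟩ := mem_image.mp hw
  obtain ⟨hik, hiA, hiB⟩ := mem_erase_lt_and_notMem hle hpriv hi
  exact ((hG i hik).fresh hiA hiB).1

theorem card_image_erase_add_one (hmem : ∀ k, k ∈ F k) (hle : ∀ k, ∀ j ∈ F k, j ≤ k)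
    (hpriv : ∀ k ∈ A ∪ B, ∀ j, k ∈ F j → j = k) {k : Fin n}
    (hG : ∀ j < k, IsRankLabel F f A B G j) :
    #(((F k).erase k).image G) + 1 = #(F k) := by
  rw [card_image_of_injOn, card_erase_add_one (hmem k)]
  exact injOn_of_isRankLabel fun i hi =>
    ⟨hG i (mem_erase_lt_and_notMem hle hpriv hi).1, (mem_erase_lt_and_notMem hle hpriv hi).2⟩

theorem exists_isRankLabel_update (hmem : ∀ k, k ∈ F k) (hle : ∀ k, ∀ j ∈ F k, j ≤ k)
    (hf : ∀ k, 1 ≤ f k ∧ f k ≤ #(F k)) (hA : ∀ k ∈ A, f k < #(F k))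
    (hB : ∀ k ∈ B, f k = #(F k)) (hpriv : ∀ k ∈ A ∪ B, ∀ j, k ∈ F j → j = k)
    (k : Fin n) (hG : ∀ j < k, IsRankLabel F f A B G j) :
    ∃ x : ℚ, IsRankLabel F f A B (update G k x) k := by
  set W := ((F k).erase k).image G
  have hW : ∀ w ∈ W, w ∈ Set.Ioo (0 : ℚ) 1 := fun w => mem_Ioo_of_mem_image_erase hle hpriv hG
  have hWcard : #W + 1 = #(F k) := card_image_erase_add_one hmem hle hpriv hG
  have hrank := card_filter_le_image_update (G := G) hmem k
  have hfk := hf k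
  by_cases hkB : k ∈ B
  · refine ⟨1, ⟨?_, fun _ h => absurd hkB h, fun hkA => absurd (hB k hkB) (hA k hkA).ne,
      fun _ => update_self ..⟩⟩
    rw [hrank, filter_true_of_mem fun w hw => (hW w hw).2, hWcard, hB k hkB]
  by_cases hkA : k ∈ A
  · have hAk := hA k hkA
    obtain ⟨w, hwW, hw⟩ := exists_mem_card_filter_lt_eq W (i := f k - 1) (by omega)
    obtain ⟨i, hi, rfl⟩ := mem_image.mp hwW
    obtain ⟨hik, hiA, hiB⟩ := mem_erase_lt_and_notMem hle hpriv hi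
    refine ⟨G i, ⟨?_, fun h => absurd hkA h, fun _ => ⟨i, hik, hiA, hiB, ?_⟩,
      fun h => absurd h hkB⟩⟩
    · rw [hrank, hw]
      omega
    · rw [update_self, update_of_ne hik.ne]
  · obtain ⟨x, hx01, hxP, hx⟩ :=
      exists_notMem_card_filter_lt_eq zero_lt_one W ((Iio k).image G) hW (i := f k - 1) (by omega)
    refine ⟨x, ⟨?_, fun _ _ => ⟨?_, fun i hik => ?_⟩, fun h => absurd h hkA,
      fun h => absurd h hkB⟩⟩
    · rw [hrank, hx]
      omega
    · rwa [update_self]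
    · rw [update_self, update_of_ne hik.ne]
      exact fun h => hxP (h ▸ mem_image_of_mem G (mem_Iio.mpr hik))

theorem exists_isRankLabel (hmem : ∀ k, k ∈ F k) (hle : ∀ k, ∀ j ∈ F k, j ≤ k)
    (hf : ∀ k, 1 ≤ f k ∧ f k ≤ #(F k)) (hA : ∀ k ∈ A, f k < #(F k))
    (hB : ∀ k ∈ B, f k = #(F k)) (hpriv : ∀ k ∈ A ∪ B, ∀ j, k ∈ F j → j = k) :
    ∃ G : Fin n → ℚ, ∀ j, IsRankLabel F f A B G j := by
  suffices ∀ k ≤ n, ∃ G : Fin n → ℚ, ∀ j : Fin n, (j : ℕ) < k → IsRankLabel F f A B G j by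
    obtain ⟨G, hG⟩ := this n le_rfl
    exact ⟨G, fun j => hG j j.isLt⟩
  intro k hk
  induction k with
  | zero => exact ⟨0, fun j hj => absurd hj (Nat.not_lt_zero _)⟩
  | succ k ih =>
    obtain ⟨G, hG⟩ := ih (Nat.le_of_succ_le hk)
    obtain ⟨x, hx⟩ := exists_isRankLabel_update hmem hle hf hA hB hpriv ⟨k, hk⟩ fun j hj => hG j hj
    refine ⟨update G ⟨k, hk⟩ x, fun j hj => ?_⟩
    rcases (Nat.lt_succ_iff.mp hj).lt_or_eq with hj | hj
    · exact (hG j hj).congr hle fun i hij =>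
        update_of_ne (Fin.ne_of_lt (lt_of_le_of_lt hij (show j < ⟨k, hk⟩ from hj))) _ _
    · obtain rfl : j = ⟨k, hk⟩ := Fin.ext hj
      exact hx

theorem card_image_of_isRankLabel (hG : ∀ j, IsRankLabel F f A B G j) :
    #(univ.image G) = #(A ∪ B)ᶜ + #(B.image G) := by
  have hfresh (j : Fin n) : j ∈ (A ∪ B)ᶜ ↔ j ∉ A ∧ j ∉ B := by simp
  have himage : univ.image G = (A ∪ B)ᶜ.image G ∪ B.image G := by
    refine Subset.antisymm (fun x hx => ?_)
      (union_subset (image_subset_image (subset_univ _)) (image_subset_image (subset_univ _)))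
    obtain ⟨j, -, rfl⟩ := mem_image.mp hx
    by_cases hjB : j ∈ B
    · exact mem_union_right _ (mem_image_of_mem G hjB)
    by_cases hjA : j ∈ A
    · obtain ⟨i, -, hiA, hiB, heq⟩ := (hG j).merged hjA
      rw [heq]
      exact mem_union_left _ (mem_image_of_mem G ((hfresh i).mpr ⟨hiA, hiB⟩))
    · exact mem_union_left _ (mem_image_of_mem G ((hfresh j).mpr ⟨hjA, hjB⟩))
  have hdisj : Disjoint ((A ∪ B)ᶜ.image G) (B.image G) := by
    refine disjoint_left.mpr fun x hx hx' => ?_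
    obtain ⟨i, hi, rfl⟩ := mem_image.mp hx
    obtain ⟨j, hj, hji⟩ := mem_image.mp hx'
    obtain ⟨hiA, hiB⟩ := (hfresh i).mp hi
    have hi1 := ((hG i).fresh hiA hiB).1.2
    rw [← hji, (hG j).top hj] at hi1
    exact lt_irrefl 1 hi1
  rw [himage, card_union_of_disjoint hdisj, card_image_of_injOn]
  exact injOn_of_isRankLabel fun j hj => ⟨hG j, (hfresh j).mp hj⟩

end RankLabel

theorem exists_surjective_satisfies_id_of_le {n m : ℕ} (F : Fin n → Finset (Fin n))
    (hmem : ∀ k, k ∈ F k) (hle : ∀ k, ∀ j ∈ F k, j ≤ k) (U : Finset (Fin n))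
    (hU : ∀ k ∈ U, ∀ j, k ∈ F j → j = k) (hm1 : n - #U + 1 ≤ m) (hm2 : m ≤ n)
    (f : Fin n → ℕ) (hf : ∀ k, 1 ≤ f k ∧ f k ≤ #(F k)) :
    ∃ σ : Fin n → Fin m, Surjective σ ∧ Satisfies F id σ f := by
  have hU_le : #U ≤ n := by simpa using card_le_univ U
  obtain ⟨A, hAX, B, hBY, hAB⟩ := exists_subsets_card_add_eq
    {k ∈ U | f k < #(F k)} {k ∈ U | ¬ f k < #(F k)} (d := n - m)
    (by rw [card_filter_add_card_filter_not]; omega)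
  have hA : ∀ k ∈ A, f k < #(F k) := fun k hk => (mem_filter.mp (hAX hk)).2
  have hB : ∀ k ∈ B, f k = #(F k) := fun k hk => by
    have := (mem_filter.mp (hBY hk)).2
    have := (hf k).2
    omega
  have hpriv : ∀ k ∈ A ∪ B, ∀ j, k ∈ F j → j = k := by
    intro k hk
    rcases mem_union.mp hk with hk | hk
    exacts [hU k (mem_filter.mp (hAX hk)).1, hU k (mem_filter.mp (hBY hk)).1]
  obtain ⟨G, hG⟩ := exists_isRankLabel hmem hle hf hA hB hpriv
  have hcard : #(univ.image G) = m := by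
    have hdisj : Disjoint A B := disjoint_left.mpr fun k hkA hkB => (hA k hkA).ne (hB k hkB)
    rw [card_image_of_isRankLabel hG, card_compl, card_union_of_disjoint hdisj, Fintype.card_fin]
    rcases hAB with ⟨rfl, hAd⟩ | ⟨hBne, hABd⟩
    · simp only [image_empty, card_empty]
      omega
    · have hAB_le : #A + #B ≤ n := by
        simpa [card_union_of_disjoint hdisj] using card_le_univ (A ∪ B)
      rw [image_congr fun j hj => (hG j).top hj, image_const hBne, card_singleton]
      omega
  obtain ⟨σ, hσ, hrank⟩ := exists_surjective_fin_card_filter_le_image G hcard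
  exact ⟨σ, hσ, fun k => (hrank (F k) k).trans (hG k).rank⟩

theorem IsShelling.exists_surjective_satisfies {n m : ℕ} {F : Fin n → Finset (Fin n)}
    (hF : IsShelling F) {t : Fin n → Fin n} (ht_inj : Injective t) (ht_mem : ∀ i, t i ∈ F i)
    (U : Finset (Fin n)) (hU : ∀ x ∈ U, ∀ i j, x ∈ F i → x ∈ F j → i = j)
    (hm1 : n - #U + 1 ≤ m) (hm2 : m ≤ n) (f : Fin n → ℕ)
    (hf : ∀ i, 1 ≤ f (t i) ∧ f (t i) ≤ #(F i)) :
    ∃ σ : Fin n → Fin m, Surjective σ ∧ Satisfies F t σ f := by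
  -- relabel the ground set along `t`, turning the transversal into the identity
  set e := Equiv.ofBijective t (Finite.injective_iff_bijective.mp ht_inj)
  set F' : Fin n → Finset (Fin n) := fun j => (F j).map e.symm.toEmbedding
  have hF' (x j : Fin n) : x ∈ F' j ↔ t x ∈ F j := by simp [F', mem_map_equiv, e]
  have hle (k j : Fin n) (hj : j ∈ F' k) : j ≤ k := by
    obtain ⟨i, hi, hij⟩ := mem_image.mp (hF.subset_image_Iic ht_inj ht_mem k ((hF' j k).mp hj))
    exact ht_inj hij ▸ mem_Iic.mp hi
  have hpriv (k : Fin n) (hk : k ∈ U.map e.symm.toEmbedding) (j : Fin n) (hkj : k ∈ F' j) :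
      j = k := by
    rw [mem_map_equiv, Equiv.symm_symm] at hk
    exact hU _ hk j k ((hF' k j).mp hkj) (ht_mem k)
  obtain ⟨σ, hσ, hsat⟩ := exists_surjective_satisfies_id_of_le F' (fun k => (hF' k k).mpr
    (ht_mem k)) hle _ hpriv (by rwa [card_map]) hm2 (f ∘ t) fun k => by
      simpa only [F', card_map, comp_apply] using hf k
  refine ⟨σ ∘ e.symm, hσ.comp e.symm.surjective, fun i => ?_⟩
  have hsat_i := hsat i
  simp only [F', map_eq_image, image_image] at hsat_i
  rw [comp_apply, show e.symm (t i) = i from e.symm_apply_apply i]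
  exact hsat_i

theorem stmt_8 {n m : ℕ} (F : Fin n → Finset (Fin n)) (hF : Shellable F)
    (t : Fin n → Fin n) (ht_inj : Function.Injective t) (ht_mem : ∀ i, t i ∈ F i)
    (S : Finset (Fin n))
    (hS : S = Finset.univ.filter fun k => (Finset.univ.filter fun i => k ∈ F i).card = 1)
    (hm1 : n - S.card + 1 ≤ m) (hm2 : m ≤ n)
    (f : Fin n → ℕ) (hf : ∀ i, 1 ≤ f (t i) ∧ f (t i) ≤ (F i).card) :
    ∃ σ : Fin n → Fin m, Function.Surjective σ ∧ Satisfies F t σ f := by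
  obtain ⟨π, hπ⟩ := hF
  have hS_priv (x : Fin n) (hx : x ∈ S) (i j : Fin n) (hi : x ∈ F (π i)) (hj : x ∈ F (π j)) :
      i = j := by
    rw [hS, mem_filter] at hx
    exact π.injective (card_le_one.mp hx.2.le _ (by simpa using hi) _ (by simpa using hj))
  obtain ⟨σ, hσ, hsat⟩ := hπ.exists_surjective_satisfies (ht_inj.comp π.injective)
    (fun i => ht_mem (π i)) S hS_priv hm1 hm2 f fun i => hf (π i)
  refine ⟨σ, hσ, fun i => ?_⟩
  obtain ⟨j, rfl⟩ := π.surjective i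
  exact hsat j
end

section
/- Let $\mathcal{F}$ be a family of $n$ nonempty subsets of $[n]$ satisfying the marriage condition with transversal $t$, let $S$ be the set of elements of $[n]$ lying in exactly one member, and let $m$ satisfy $\min(n,n-|S|+1)\le m\le n$. Then $\mathcal{F}$ is shellable if and only if for every configuration $f$ of $t$ there exists a surjective map $\sigma:[n]\to[m]$ that satisfies $f$. -/
open Finset Function

section Aux

lemma fin_filter_lt_card {N k : ℕ} (hk : k ≤ N) :
    ((univ : Finset (Fin N)).filter fun i : Fin N => (i : ℕ) < k).card = k := by
  have h : ((univ : Finset (Fin N)).filter fun i : Fin N => (i : ℕ) < k)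
      = (univ : Finset (Fin k)).image (Fin.castLE hk) := by
    ext i
    simp only [mem_filter, mem_univ, true_and, mem_image]
    constructor
    · intro hi; exact ⟨⟨i, hi⟩, Fin.ext rfl⟩
    · rintro ⟨j, -, rfl⟩; exact j.isLt
  rw [h, Finset.card_image_of_injective _ (Fin.castLE_injective hk), card_univ,
    Fintype.card_fin]

lemma fin_filter_le_card {N : ℕ} (k : Fin N) :
    ((univ : Finset (Fin N)).filter fun i => i ≤ k).card = (k : ℕ) + 1 := by
  have h : ((univ : Finset (Fin N)).filter fun i => i ≤ k)
      = (univ : Finset (Fin N)).filter fun i : Fin N => (i : ℕ) < (k : ℕ) + 1 := by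
    ext i
    simp only [mem_filter, mem_univ, true_and, Fin.le_def, Nat.lt_succ_iff]
  rw [h, fin_filter_lt_card k.isLt]

lemma filter_lt_oiso (V : Finset ℚ) {N : ℕ} (h : V.card = N) (k : Fin N) :
    (V.filter fun x => x < (V.orderIsoOfFin h k : ℚ)).card = (k : ℕ) := by
  have him : V.filter (fun x => x < (V.orderIsoOfFin h k : ℚ))
      = ((univ : Finset (Fin N)).filter fun j => j < k).image
          (fun j => (V.orderIsoOfFin h j : ℚ)) := by
    ext x
    simp only [mem_filter, mem_univ, true_and, mem_image]
    constructor
    · rintro ⟨hxV, hxlt⟩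
      refine ⟨(V.orderIsoOfFin h).symm ⟨x, hxV⟩, ?_, ?_⟩
      · have := (V.orderIsoOfFin h).symm.strictMono (a := (⟨x, hxV⟩ : V))
          (b := V.orderIsoOfFin h k) hxlt
        rwa [OrderIso.symm_apply_apply] at this
      · rw [OrderIso.apply_symm_apply]
    · rintro ⟨j, hj, rfl⟩
      exact ⟨(V.orderIsoOfFin h j).2, (V.orderIsoOfFin h).strictMono hj⟩
  have hinj : Function.Injective (fun j => (V.orderIsoOfFin h j : ℚ)) := by
    intro a b hab
    exact (V.orderIsoOfFin h).injective (Subtype.ext hab)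
  rw [him, Finset.card_image_of_injective _ hinj]
  have h2 : ((univ : Finset (Fin N)).filter fun j => j < k)
      = ((univ : Finset (Fin N)).filter fun j : Fin N => (j : ℕ) < (k : ℕ)) := by
    ext i
    simp only [mem_filter, mem_univ, true_and, Fin.lt_def]
  rw [h2, fin_filter_lt_card k.isLt.le]

lemma filter_le_oiso (V : Finset ℚ) {N : ℕ} (h : V.card = N) (k : Fin N) :
    (V.filter fun x => x ≤ (V.orderIsoOfFin h k : ℚ)).card = (k : ℕ) + 1 := by
  set v : ℚ := (V.orderIsoOfFin h k : ℚ) with hv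
  have hsplit : V.filter (fun x => x ≤ v) = insert v (V.filter fun x => x < v) := by
    ext x
    simp only [mem_filter, mem_insert]
    constructor
    · rintro ⟨hxV, hxle⟩
      rcases eq_or_lt_of_le hxle with h' | h'
      · exact Or.inl h'
      · exact Or.inr ⟨hxV, h'⟩
    · rintro (rfl | ⟨hxV, hxlt⟩)
      · exact ⟨(V.orderIsoOfFin h k).2, le_refl _⟩
      · exact ⟨hxV, hxlt.le⟩
  rw [hsplit, card_insert_of_notMem (by simp), filter_lt_oiso V h k]


lemma exists_insert_value (V A : Finset ℚ) (r : ℕ) (hr : r ≤ V.card) :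
    ∃ q, q ∉ A ∧ (V.filter fun x => x < q).card = r := by
  classical
  set iso := V.orderIsoOfFin rfl with hiso
  by_cases hV : V = ∅
  · subst hV
    simp only [card_empty, Nat.le_zero] at hr
    obtain ⟨q, hq⟩ := Infinite.exists_notMem_finset A
    exact ⟨q, hq, by simp [hr]⟩
  have hVne : V.Nonempty := nonempty_iff_ne_empty.mpr hV
  have hN : 0 < V.card := card_pos.mpr hVne
  rcases Nat.eq_zero_or_pos r with rfl | hrpos
  · -- pick q below everything
    obtain ⟨q, hq1, hq2⟩ := (Set.Iio_infinite (V.min' hVne)).exists_notMem_finset A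
    refine ⟨q, hq2, ?_⟩
    rw [Finset.card_eq_zero, Finset.filter_eq_empty_iff]
    intro x hx
    have : q < x := lt_of_lt_of_le hq1 (V.min'_le x hx)
    exact not_lt_of_gt this
  rcases eq_or_lt_of_le hr with hreq | hrlt
  · -- q above everything
    obtain ⟨q, hq1, hq2⟩ := (Set.Ioi_infinite (V.max' hVne)).exists_notMem_finset A
    refine ⟨q, hq2, ?_⟩
    have : V.filter (fun x => x < q) = V := by
      apply Finset.filter_true_of_mem
      intro x hx
      exact lt_of_le_of_lt (V.le_max' x hx) hq1
    rw [this, hreq]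
  · -- 1 ≤ r < V.card
    have hr1 : r - 1 < V.card := lt_of_le_of_lt (Nat.sub_le _ _) hrlt
    set u : ℚ := (iso ⟨r - 1, hr1⟩ : ℚ) with hu
    set w : ℚ := (iso ⟨r, hrlt⟩ : ℚ) with hw
    have huw : u < w := by
      apply iso.strictMono
      simp only [Fin.mk_lt_mk]
      omega
    obtain ⟨q, hq1, hq2⟩ := (Set.Ioo_infinite huw).exists_notMem_finset A
    obtain ⟨huq, hqw⟩ := hq1
    refine ⟨q, hq2, ?_⟩
    have heq : V.filter (fun x => x < q) = V.filter (fun x => x ≤ u) := by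
      ext x
      simp only [mem_filter, and_congr_right_iff]
      intro hx
      constructor
      · intro hxq
        by_contra hxu
        push_neg at hxu
        -- x > u, so index ≥ r, so x ≥ w > q
        have hidx : (⟨r - 1, hr1⟩ : Fin V.card) < iso.symm ⟨x, hx⟩ := by
          by_contra hle
          push_neg at hle
          have := iso.monotone hle
          rw [OrderIso.apply_symm_apply] at this
          exact absurd this (not_le_of_gt hxu)
        have hridx : (⟨r, hrlt⟩ : Fin V.card) ≤ iso.symm ⟨x, hx⟩ := by
          simp only [Fin.le_def, Fin.lt_def] at hidx ⊢
          omega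
        have := iso.monotone hridx
        rw [OrderIso.apply_symm_apply] at this
        have : w ≤ x := this
        exact absurd hxq (not_lt_of_gt (lt_of_lt_of_le hqw this))
      · intro hxu
        exact lt_of_le_of_lt hxu huq
    rw [heq]
    have := filter_le_oiso V rfl ⟨r - 1, hr1⟩
    rw [← hiso] at this
    rw [← hu] at this
    rw [this]
    show r - 1 + 1 = r
    omega


def SatQ {n : ℕ} (F : Fin n → Finset (Fin n)) (t : Fin n → Fin n)
    (σ : Fin n → ℚ) (f : Fin n → ℕ) : Prop :=
  ∀ i, (((F i).image σ).filter fun y => y ≤ σ (t i)).card = f (t i)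

lemma compress {n m : ℕ} (F : Fin n → Finset (Fin n)) (t : Fin n → Fin n)
    (f : Fin n → ℕ) (σq : Fin n → ℚ) (hsat : SatQ F t σq f)
    (hcard : (Finset.univ.image σq).card = m) :
    ∃ σ : Fin n → Fin m, Function.Surjective σ ∧ Satisfies F t σ f := by
  classical
  set I : Finset ℚ := Finset.univ.image σq with hI
  set e := I.orderIsoOfFin hcard with he
  have hmemI : ∀ x : Fin n, σq x ∈ I := fun x => mem_image_of_mem _ (mem_univ x)
  set σ : Fin n → Fin m := fun x => e.symm ⟨σq x, hmemI x⟩ with hσ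
  refine ⟨σ, ?_, ?_⟩
  · intro j
    have : (e j : ℚ) ∈ I := (e j).2
    obtain ⟨x, -, hx⟩ := mem_image.mp this
    refine ⟨x, ?_⟩
    show e.symm ⟨σq x, hmemI x⟩ = j
    have h3 : (⟨σq x, hmemI x⟩ : I) = e j := Subtype.ext hx
    rw [h3, OrderIso.symm_apply_apply]
  · intro i
    rw [← hsat i]
    apply Finset.card_bij (fun z _ => (e z : ℚ))
    · intro z hz
      simp only [mem_filter, mem_image] at hz ⊢
      obtain ⟨⟨x, hxF, hxz⟩, hzle⟩ := hz
      constructor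
      · refine ⟨x, hxF, ?_⟩
        rw [← hxz, hσ, OrderIso.apply_symm_apply]
      · have := e.monotone hzle
        have h2 : (e (σ (t i)) : ℚ) = σq (t i) := by
          rw [hσ, OrderIso.apply_symm_apply]
        calc (e z : ℚ) ≤ (e (σ (t i)) : ℚ) := this
          _ = σq (t i) := h2
    · intro z1 h1 z2 h2 hz
      exact e.injective (Subtype.ext hz)
    · intro y hy
      simp only [mem_filter, mem_image] at hy
      obtain ⟨⟨x, hxF, hxy⟩, hyle⟩ := hy
      refine ⟨σ x, ?_, ?_⟩
      · simp only [mem_filter, mem_image]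
        constructor
        · exact ⟨x, hxF, rfl⟩
        · rw [hσ]
          apply (e.symm).monotone
          show (⟨σq x, _⟩ : I) ≤ ⟨σq (t i), _⟩
          rw [Subtype.mk_le_mk, hxy]
          exact hyle
      · rw [hσ, OrderIso.apply_symm_apply]
        exact hxy


lemma merge {n m : ℕ} (F : Fin n → Finset (Fin n)) (t : Fin n → Fin n)
    (ht_inj : Function.Injective t) (ht_mem : ∀ i, t i ∈ F i)
    (S : Finset (Fin n))
    (hSt : ∀ i s, s ∈ S → s ∈ F i → s = t i)
    (hSmem : ∀ s ∈ S, ∃ i, s ∈ F i)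
    (f : Fin n → ℕ) (hf : ∀ i, 1 ≤ f (t i) ∧ f (t i) ≤ (F i).card)
    (σq : Fin n → ℚ) (hinj : Function.Injective σq) (hsat : SatQ F t σq f)
    (hmn : m ≤ n) (hSm : n - m < S.card) :
    ∃ σq' : Fin n → ℚ, SatQ F t σq' f ∧ (Finset.univ.image σq').card = m := by
  classical
  -- the index of the unique set containing an element of S
  have hidx' : ∀ d, d ∈ S → ∃ i, d ∈ F i ∧ t i = d := by
    intro d hd
    obtain ⟨i, hi⟩ := hSmem d hd
    exact ⟨i, hi, (hSt i d hd hi).symm⟩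
  choose! idx hidx1 hidx2 using hidx'
  set W : Finset ℚ := S.image σq with hW
  have hWcard : W.card = S.card := card_image_of_injective _ hinj
  set θ : ℚ := (W.orderIsoOfFin hWcard ⟨n - m, hSm⟩ : ℚ) with hθ
  set D : Finset (Fin n) := S.filter (fun s => σq s < θ) with hD
  have hDS : D ⊆ S := filter_subset _ _
  have hDlt : ∀ d ∈ D, σq d < θ := fun d hd => (mem_filter.mp hd).2
  have hDcard : D.card = n - m := by
    have h1 : D.image σq = W.filter (fun x => x < θ) := by
      rw [hD, hW, filter_image]
    have h2 : (W.filter (fun x => x < θ)).card = n - m := by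
      have := filter_lt_oiso W hWcard ⟨n - m, hSm⟩
      rw [← hθ] at this
      exact this
    rw [← h2, ← h1, card_image_of_injective _ hinj]
  -- the witness element sstar with value θ
  have hθW : θ ∈ W := (W.orderIsoOfFin hWcard ⟨n - m, hSm⟩).2
  obtain ⟨sstar, hsS, hsval⟩ := mem_image.mp hθW
  have hsD : sstar ∉ D := by
    rw [hD, mem_filter]
    rintro ⟨-, h⟩
    rw [hsval] at h
    exact lt_irrefl _ h
  -- members of a set other than its S-element are not in D
  have hMD : ∀ i, ∀ x ∈ (F i).erase (t i), x ∉ D := by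
    intro i x hx hxD
    obtain ⟨hxne, hxF⟩ := mem_erase.mp hx
    exact hxne (hSt i x (hDS hxD) hxF)
  -- choice of new value for each d ∈ D
  have hv : ∀ d, d ∈ D → ∃ vd : ℚ, (∃ x, x ∉ D ∧ σq x = vd) ∧
      ((insert vd (((F (idx d)).erase d).image σq)).filter (fun y => y ≤ vd)).card
        = f d := by
    intro d hdD
    have hdS : d ∈ S := hDS hdD
    set i := idx d with hi
    have hdF : d ∈ F i := hidx1 d hdS
    have hdt : t i = d := hidx2 d hdS
    set M : Finset (Fin n) := (F i).erase d with hM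
    set V : Finset ℚ := M.image σq with hV
    have hVcard : V.card = M.card := card_image_of_injective _ hinj
    have hMcard : M.card = (F i).card - 1 := card_erase_of_mem hdF
    have hFpos : 1 ≤ (F i).card := card_pos.mpr ⟨d, hdF⟩
    have hfd1 : 1 ≤ f d := by have := (hf i).1; rwa [hdt] at this
    have hfd2 : f d ≤ (F i).card := by have := (hf i).2; rwa [hdt] at this
    have hMDd : ∀ x ∈ M, x ∉ D := by
      intro x hx
      apply hMD i
      rwa [hdt]
    by_cases hle : f d ≤ V.card
    · -- v is the (f d)-th smallest member value
      have hfd3 : f d - 1 < V.card := by omega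
      set v : ℚ := (V.orderIsoOfFin rfl ⟨f d - 1, hfd3⟩ : ℚ) with hv
      have hvV : v ∈ V := (V.orderIsoOfFin rfl ⟨f d - 1, hfd3⟩).2
      obtain ⟨x, hxM, hxv⟩ := mem_image.mp hvV
      refine ⟨v, ⟨x, hMDd x hxM, hxv⟩, ?_⟩
      rw [insert_eq_self.mpr hvV]
      have := filter_le_oiso V rfl ⟨f d - 1, hfd3⟩
      rw [← hv] at this
      rw [this]
      show f d - 1 + 1 = f d
      omega
    · -- f d = (F i).card ; v = σq sstar is above everything
      have hfd4 : f d = (F i).card := by omega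
      set v : ℚ := σq sstar with hv
      refine ⟨v, ⟨sstar, hsD, rfl⟩, ?_⟩
      -- every member value is < σq d
      have himcard : ((F i).image σq).card = (F i).card :=
        card_image_of_injective _ hinj
      have hfull : ((F i).image σq).filter (fun y => y ≤ σq (t i)) = (F i).image σq := by
        apply Finset.eq_of_subset_of_card_le (filter_subset _ _)
        rw [hsat i, himcard]
        rw [hdt, hfd4]
      have hallle : ∀ y ∈ (F i).image σq, y ≤ σq d := by
        intro y hy
        have : y ∈ ((F i).image σq).filter (fun y => y ≤ σq (t i)) := by
          rw [hfull]; exact hy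
        have := (mem_filter.mp this).2
        rwa [hdt] at this
      have hVlt : ∀ y ∈ V, y < v := by
        intro y hy
        obtain ⟨x, hxM, hxy⟩ := mem_image.mp hy
        obtain ⟨hxne, hxF⟩ := mem_erase.mp hxM
        have h1 : y ≤ σq d := hallle y (hxy ▸ mem_image_of_mem _ hxF)
        have h2 : y ≠ σq d := by
          rw [← hxy]
          intro hc
          exact hxne (hinj hc)
        have h3 : σq d < θ := hDlt d hdD
        have h4 : y < θ := lt_of_lt_of_le (lt_of_le_of_ne h1 h2) h3.le
        exact lt_of_lt_of_eq h4 hsval.symm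
      have hvV : v ∉ V := fun hc => lt_irrefl v (hVlt v hc)
      have hfull2 : (insert v V).filter (fun y => y ≤ v) = insert v V := by
        apply Finset.filter_true_of_mem
        intro y hy
        rcases mem_insert.mp hy with rfl | hyV
        · exact le_refl _
        · exact (hVlt y hyV).le
      rw [hfull2, card_insert_of_notMem hvV, hVcard, hMcard]
      omega
  choose! v hv1 hv2 using hv
  set σq' : Fin n → ℚ := fun x => if x ∈ D then v x else σq x with hσq'
  have hσq'D : ∀ x ∈ D, σq' x = v x := by intro x hx; simp [hσq', hx]
  have hσq'nD : ∀ x, x ∉ D → σq' x = σq x := by intro x hx; simp [hσq', hx]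
  refine ⟨σq', ?_, ?_⟩
  · -- SatQ
    intro i
    by_cases hFD : ∃ d ∈ F i, d ∈ D
    · obtain ⟨d, hdF, hdD⟩ := hFD
      have hdS : d ∈ S := hDS hdD
      have hdt : d = t i := hSt i d hdS hdF
      have hidxd : idx d = i := ht_inj (by rw [hidx2 d hdS, hdt])
      have hsub : ∀ x ∈ (F i).erase d, σq' x = σq x := by
        intro x hx
        apply hσq'nD
        have hx' : x ∈ (F i).erase (t i) := by rwa [← hdt]
        exact hMD i x hx'
      have him : (F i).image σq' = insert (v d) (((F i).erase d).image σq) := by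
        conv_lhs => rw [← insert_erase hdF]
        rw [image_insert, hσq'D d hdD]
        congr 1
        exact image_congr hsub
      have hti : σq' (t i) = v d := by rw [← hdt]; exact hσq'D d hdD
      rw [him, hti]
      have := hv2 d hdD
      rw [hidxd] at this
      rw [this, hdt]
    · push_neg at hFD
      have him : (F i).image σq' = (F i).image σq :=
        image_congr (fun x hx => hσq'nD x (hFD x hx))
      have hti : σq' (t i) = σq (t i) := hσq'nD _ (hFD _ (ht_mem i))
      rw [him, hti]
      exact hsat i
  · -- image card
    have him : Finset.univ.image σq' = (Finset.univ \ D).image σq := by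
      ext y
      simp only [mem_image, mem_sdiff, mem_univ, true_and]
      constructor
      · rintro ⟨x, -, rfl⟩
        by_cases hx : x ∈ D
        · obtain ⟨x0, hx0D, hx0v⟩ := hv1 x hx
          refine ⟨x0, hx0D, ?_⟩
          rw [hσq'D x hx, hx0v]
        · exact ⟨x, hx, (hσq'nD x hx).symm⟩
      · rintro ⟨x, hxD, rfl⟩
        exact ⟨x, hσq'nD x hxD⟩
    rw [him, card_image_of_injective _ hinj, card_sdiff_of_subset (subset_univ D), card_univ,
      Fintype.card_fin, hDcard]
    omega


lemma build_inj {n : ℕ} (F : Fin n → Finset (Fin n)) (t : Fin n → Fin n)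
    (ht_inj : Function.Injective t) (ht_mem : ∀ i, t i ∈ F i)
    (π : Equiv.Perm (Fin n))
    (hmem : ∀ (k : Fin n), ∀ x ∈ F (π k), ∃ j : Fin n, j ≤ k ∧ x = t (π j))
    (f : Fin n → ℕ) (hf : ∀ i, 1 ≤ f (t i) ∧ f (t i) ≤ (F i).card) :
    ∃ σq : Fin n → ℚ, Function.Injective σq ∧ SatQ F t σq f := by
  classical
  set b : Fin n → Fin n := fun k => t (π k) with hb
  have hb_inj : Function.Injective b := ht_inj.comp π.injective
  set J : Fin n → Finset (Fin n) :=
    fun k => Finset.univ.filter (fun j => j < k ∧ b j ∈ F (π k)) with hJ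
  have hJb : ∀ k, (J k).image b = (F (π k)).erase (b k) := by
    intro k
    ext x
    simp only [hJ, mem_image, mem_filter, mem_univ, true_and, mem_erase]
    constructor
    · rintro ⟨j, ⟨hjk, hjF⟩, rfl⟩
      exact ⟨fun hc => absurd (hb_inj hc) (ne_of_lt hjk), hjF⟩
    · rintro ⟨hxne, hxF⟩
      obtain ⟨j, hjk, rfl⟩ := hmem k x hxF
      exact ⟨j, ⟨lt_of_le_of_ne hjk (fun hc => hxne (by rw [hc])), hxF⟩, rfl⟩
  have hJcard : ∀ k, (J k).card = (F (π k)).card - 1 := by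
    intro k
    rw [← card_image_of_injective (J k) hb_inj, hJb k, card_erase_of_mem (ht_mem (π k))]
  have main : ∀ K : ℕ, K ≤ n → ∃ g : Fin n → ℚ,
      (∀ j1 j2 : Fin n, (j1 : ℕ) < K → (j2 : ℕ) < K → g j1 = g j2 → j1 = j2) ∧
      (∀ k : Fin n, (k : ℕ) < K →
        (((J k).image g).filter (fun y => y < g k)).card = f (b k) - 1) := by
    intro K
    induction K with
    | zero => exact fun _ => ⟨fun _ => 0, fun j1 j2 h => absurd h (by omega),
        fun k h => absurd h (by omega)⟩
    | succ K ih =>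
      intro hK1
      obtain ⟨g, hg1, hg2⟩ := ih (Nat.le_of_succ_le hK1)
      have hKn : K < n := hK1
      set kk : Fin n := ⟨K, hKn⟩ with hkk
      have hmemJ : ∀ j ∈ J kk, (j : ℕ) < K := by
        intro j hj
        have := (mem_filter.mp hj).2.1
        exact this
      have hinjOn : Set.InjOn g (J kk) := by
        intro x hx y hy hxy
        exact hg1 x y (hmemJ x hx) (hmemJ y hy) hxy
      set Vk : Finset ℚ := (J kk).image g with hVk
      have hVkcard : Vk.card = (J kk).card := card_image_of_injOn hinjOn
      have hfk1 : 1 ≤ f (b kk) := (hf (π kk)).1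
      have hfk2 : f (b kk) ≤ (F (π kk)).card := (hf (π kk)).2
      have hr : f (b kk) - 1 ≤ Vk.card := by
        rw [hVkcard, hJcard kk]; omega
      obtain ⟨q, hqA, hqr⟩ := exists_insert_value Vk (Finset.univ.image g) _ hr
      have hqg : ∀ j : Fin n, q ≠ g j := by
        intro j hc
        exact hqA (hc ▸ mem_image_of_mem g (mem_univ j))
      refine ⟨Function.update g kk q, ?_, ?_⟩
      · intro j1 j2 h1 h2 heq
        by_cases e1 : j1 = kk <;> by_cases e2 : j2 = kk
        · rw [e1, e2]
        · subst e1
          rw [update_self, update_of_ne e2] at heq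
          exact absurd heq (hqg j2)
        · subst e2
          rw [update_of_ne e1, update_self] at heq
          exact absurd heq.symm (hqg j1)
        · rw [update_of_ne e1, update_of_ne e2] at heq
          have v1 : (j1 : ℕ) < K := by
            rcases Nat.lt_succ_iff_lt_or_eq.mp h1 with h | h
            · exact h
            · exact absurd (Fin.ext h : j1 = kk) e1
          have v2 : (j2 : ℕ) < K := by
            rcases Nat.lt_succ_iff_lt_or_eq.mp h2 with h | h
            · exact h
            · exact absurd (Fin.ext h : j2 = kk) e2
          exact hg1 j1 j2 v1 v2 heq
      · intro k hk
        have hJne : ∀ j ∈ J k, j ≠ kk := by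
          intro j hj hc
          have h1 := (mem_filter.mp hj).2.1
          have h2 : (j : ℕ) < (k : ℕ) := h1
          have h3 : (k : ℕ) < K + 1 := hk
          rw [hc] at h2
          simp only [hkk] at h2
          omega
        have himg : (J k).image (Function.update g kk q) = (J k).image g :=
          image_congr (fun j hj => update_of_ne (hJne j hj) _ _)
        rcases Nat.lt_succ_iff_lt_or_eq.mp hk with hlt | heq
        · have hkne : k ≠ kk := fun hc => by rw [hc] at hlt; exact lt_irrefl K hlt
          rw [himg, update_of_ne hkne]
          exact hg2 k hlt
        · have hkeq : k = kk := Fin.ext heq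
          rw [hkeq] at himg ⊢
          rw [himg, update_self]
          exact hqr
  obtain ⟨g, hg1, hg2⟩ := main n le_rfl
  have ginj : Function.Injective g := fun a b h => hg1 a b a.isLt b.isLt h
  have hbbij : Function.Bijective b :=
    (Finite.injective_iff_bijective).mp hb_inj
  set eb : Fin n ≃ Fin n := Equiv.ofBijective b hbbij with heb
  set σq : Fin n → ℚ := fun x => g (eb.symm x) with hσq
  have hσb : ∀ k, σq (b k) = g k := by
    intro k
    have : eb.symm (b k) = k := by
      have : b k = eb k := rfl
      rw [this, Equiv.symm_apply_apply]
    rw [hσq]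
    simp only []
    rw [this]
  refine ⟨σq, ginj.comp (eb.symm.injective), ?_⟩
  intro i
  set k : Fin n := π.symm i with hk
  have hik : π k = i := π.apply_symm_apply i
  have hti : t i = b k := by show t i = t (π k); rw [hik]
  have hFi : F i = insert (b k) ((J k).image b) := by
    rw [hJb k, hik, insert_erase]
    rw [← hik]
    exact hb ▸ ht_mem (π k)
  have him : (F i).image σq = insert (g k) ((J k).image g) := by
    rw [hFi, image_insert, hσb, image_image]
    congr 1
    apply image_congr
    intro j _
    exact hσb j
  have hgknot : g k ∉ (J k).image g := by
    intro hc
    obtain ⟨j, hj, hjeq⟩ := mem_image.mp hc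
    have := ginj hjeq
    have hjk := (mem_filter.mp hj).2.1
    rw [this] at hjk
    exact lt_irrefl _ hjk
  have hfilter : ((insert (g k) ((J k).image g)).filter (fun y => y ≤ g k))
      = insert (g k) (((J k).image g).filter (fun y => y < g k)) := by
    ext y
    simp only [mem_filter, mem_insert]
    constructor
    · rintro ⟨rfl | hyV, hyle⟩
      · exact Or.inl rfl
      · rcases eq_or_lt_of_le hyle with h | h
        · exact Or.inl h
        · exact Or.inr ⟨hyV, h⟩
    · rintro (rfl | ⟨hyV, hylt⟩)
      · exact ⟨Or.inl rfl, le_refl _⟩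
      · exact ⟨Or.inr hyV, hylt.le⟩
  rw [him, hti, hσb, hfilter, card_insert_of_notMem
    (fun hc => hgknot (mem_of_mem_filter _ hc)), hg2 k k.isLt]
  have : 1 ≤ f (b k) := by
    have := (hf i).1
    rwa [hti] at this
  omega
end Aux

theorem stmt_9 {n m : ℕ} (F : Fin n → Finset (Fin n))
    (hne : ∀ i, (F i).Nonempty)
    (hHall : ∀ I : Finset (Fin n), I.card ≤ (I.biUnion F).card)
    (t : Fin n → Fin n) (ht_inj : Function.Injective t) (ht_mem : ∀ i, t i ∈ F i)
    (S : Finset (Fin n))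
    (hS : S = Finset.univ.filter fun k => (Finset.univ.filter fun i => k ∈ F i).card = 1)
    (hm1 : min n (n - S.card + 1) ≤ m) (hm2 : m ≤ n) :
    Shellable F ↔
      ∀ f : Fin n → ℕ, (∀ i, 1 ≤ f (t i) ∧ f (t i) ≤ (F i).card) →
        ∃ σ : Fin n → Fin m, Function.Surjective σ ∧ Satisfies F t σ f := by
  classical
  constructor
  · -- forward: shellable → configurations are satisfiable
    rintro ⟨π, hsh⟩ f hf
    have hT : ∀ k : Fin n, (Finset.univ.filter fun i => i ≤ k).biUnion (F ∘ π)
        = (Finset.univ.filter fun i => i ≤ k).image (fun j => t (π j)) := by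
      intro k
      symm
      apply Finset.eq_of_subset_of_card_le
      · intro x hx
        obtain ⟨j, hj, rfl⟩ := mem_image.mp hx
        exact mem_biUnion.mpr ⟨j, hj, ht_mem (π j)⟩
      · rw [hsh k, card_image_of_injective _ (show Function.Injective (fun j => t (π j)) from fun a b h => π.injective (ht_inj h)),
          fin_filter_le_card k]
    have hmem : ∀ (k : Fin n), ∀ x ∈ F (π k), ∃ j : Fin n, j ≤ k ∧ x = t (π j) := by
      intro k x hx
      have hxk : x ∈ (Finset.univ.filter fun i => i ≤ k).biUnion (F ∘ π) :=
        mem_biUnion.mpr ⟨k, mem_filter.mpr ⟨mem_univ _, le_refl _⟩, hx⟩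
      rw [hT k] at hxk
      obtain ⟨j, hj, hje⟩ := mem_image.mp hxk
      exact ⟨j, (mem_filter.mp hj).2, hje.symm⟩
    have hScard : ∀ s ∈ S, (Finset.univ.filter fun i => s ∈ F i).card = 1 := by
      intro s hs
      rw [hS] at hs
      exact (mem_filter.mp hs).2
    have hSt : ∀ i s, s ∈ S → s ∈ F i → s = t i := by
      intro i s hsS hsF
      obtain ⟨a, ha⟩ := card_eq_one.mp (hScard s hsS)
      set k := π.symm i with hk
      have hik : π k = i := π.apply_symm_apply i
      have hsFk : s ∈ F (π k) := by rw [hik]; exact hsF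
      obtain ⟨j, hjk, hje⟩ := hmem k s hsFk
      have h1 : π j ∈ Finset.univ.filter (fun i' => s ∈ F i') :=
        mem_filter.mpr ⟨mem_univ _, by rw [hje]; exact ht_mem (π j)⟩
      have h2 : i ∈ Finset.univ.filter (fun i' => s ∈ F i') :=
        mem_filter.mpr ⟨mem_univ _, hsF⟩
      rw [ha, mem_singleton] at h1 h2
      rw [hje, h1, h2]
    have hSmem : ∀ s ∈ S, ∃ i, s ∈ F i := by
      intro s hs
      have hc := hScard s hs
      have hne' : (Finset.univ.filter fun i => s ∈ F i).Nonempty :=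
        card_pos.mp (by rw [hc]; norm_num)
      obtain ⟨i, hi⟩ := hne'
      exact ⟨i, (mem_filter.mp hi).2⟩
    obtain ⟨σq, hinj, hsat⟩ := build_inj F t ht_inj ht_mem π hmem f hf
    rcases min_le_iff.mp hm1 with hnm | hsm
    · have hmn' : m = n := le_antisymm hm2 hnm
      apply compress F t f σq hsat
      rw [card_image_of_injective _ hinj, card_univ, Fintype.card_fin, hmn']
    · have hSm : n - m < S.card := by omega
      obtain ⟨σq', hsat', hcard'⟩ :=
        merge F t ht_inj ht_mem S hSt hSmem f hf σq hinj hsat hm2 hSm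
      exact compress F t f σq' hsat' hcard'
  · -- backward: satisfiability of all configurations → shellable
    intro H
    have htbij : Function.Bijective t := Finite.injective_iff_bijective.mp ht_inj
    set et : Fin n ≃ Fin n := Equiv.ofBijective t htbij with het
    set f : Fin n → ℕ := fun x => (F (et.symm x)).card with hfdef
    have hfb : ∀ i, f (t i) = (F i).card := by
      intro i
      have h0 : et.symm (t i) = i := by
        have h1 : t i = et i := rfl
        rw [h1, Equiv.symm_apply_apply]
      show (F (et.symm (t i))).card = (F i).card
      rw [h0]
    obtain ⟨σ, hsurj, hsat⟩ := H f (fun i => by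
      rw [hfb i]; exact ⟨card_pos.mpr (hne i), le_rfl⟩)
    have key : ∀ i, (∀ x ∈ F i, σ x ≤ σ (t i)) ∧ Set.InjOn σ (F i) := by
      intro i
      have h1 : ((F i).image σ).filter (fun y => y ≤ σ (t i)) ⊆ (F i).image σ :=
        filter_subset _ _
      have h2 : ((F i).image σ).card ≤ (F i).card := card_image_le
      have h3 := hsat i
      rw [hfb i] at h3
      have h4 : (F i).card ≤ ((F i).image σ).card := h3 ▸ card_le_card h1
      have h5 : ((F i).image σ).card = (F i).card := le_antisymm h2 h4
      have h6 : ((F i).image σ).filter (fun y => y ≤ σ (t i)) = (F i).image σ :=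
        Finset.eq_of_subset_of_card_le h1 (by rw [h3, h5])
      constructor
      · intro x hx
        have hmem : σ x ∈ (F i).image σ := mem_image_of_mem _ hx
        rw [← h6] at hmem
        exact (mem_filter.mp hmem).2
      · exact card_image_iff.mp h5
    set π : Equiv.Perm (Fin n) := Tuple.sort (fun j => σ (t j)) with hπ
    refine ⟨π, ?_⟩
    intro k
    have hmono : Monotone ((fun j => σ (t j)) ∘ π) := Tuple.monotone_sort _
    have hEq : (Finset.univ.filter fun i => i ≤ k).biUnion (F ∘ π)
        = (Finset.univ.filter fun i => i ≤ k).image (fun j => t (π j)) := by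
      apply subset_antisymm
      · intro x hx
        obtain ⟨j, hj, hxF⟩ := mem_biUnion.mp hx
        have hjk : j ≤ k := (mem_filter.mp hj).2
        obtain ⟨i', hi'⟩ := htbij.2 x
        set j' := π.symm i' with hj'def
        have hpj' : π j' = i' := π.apply_symm_apply i'
        by_cases hcase : x = t (π j)
        · exact mem_image.mpr ⟨j, hj, hcase.symm⟩
        · have hle : σ x ≤ σ (t (π j)) := (key (π j)).1 x hxF
          have hlt : σ x < σ (t (π j)) := by
            rcases lt_or_eq_of_le hle with h | h
            · exact h
            · exact absurd ((key (π j)).2 (Finset.mem_coe.mpr hxF)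
                (Finset.mem_coe.mpr (ht_mem (π j))) h) hcase
          have hj'j : j' < j := by
            by_contra hc
            push_neg at hc
            have hm' := hmono hc
            simp only [Function.comp_apply] at hm'
            rw [hpj', hi'] at hm'
            exact absurd hlt (not_lt_of_ge hm')
          refine mem_image.mpr ⟨j', mem_filter.mpr
            ⟨mem_univ _, le_of_lt (lt_of_lt_of_le hj'j hjk)⟩, ?_⟩
          rw [hpj', hi']
      · intro x hx
        obtain ⟨j, hj, rfl⟩ := mem_image.mp hx
        exact mem_biUnion.mpr ⟨j, hj, ht_mem (π j)⟩
    rw [hEq, card_image_of_injective _ (show Function.Injective (fun j => t (π j)) from fun a b h => π.injective (ht_inj h)), fin_filter_le_card k]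
end

section
/- Let $\lambda/\mu$ be a skew Young diagram with $n$ cells and hook family $\mathcal{F}=\{H_r: r \text{ a cell}\}$. The unique transversal $t$ of $\mathcal{F}$ is given by $t(H_r)=r$ for every cell $r$. -/
open Finset Function

theorem stmt_11 (lam mu : ℕ → ℕ) (hlam : Antitone lam) (hmu : Antitone mu)
    (hle : ∀ i, mu i ≤ lam i)
    (C : Finset (ℕ × ℕ))
    (hC : ∀ r : ℕ × ℕ, r ∈ C ↔ mu r.1 < r.2 ∧ r.2 ≤ lam r.1)
    (H : ℕ × ℕ → Finset (ℕ × ℕ))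
    (hH : ∀ r, H r =
      C.filter fun r' => r.1 ≤ r'.1 ∧ r.2 ≤ r'.2 ∧ (r'.1 = r.1 ∨ r'.2 = r.2)) :
    -- `fun r => r.val` is a transversal of the hook family indexed by the cells
    (Function.Injective (fun r : {x // x ∈ C} => r.val) ∧
      ∀ r : {x // x ∈ C}, r.val ∈ H r.val) ∧
    -- and it is the unique transversal
    ∀ t : {x // x ∈ C} → ℕ × ℕ, Function.Injective t →
      (∀ r : {x // x ∈ C}, t r ∈ H r.val) → ∀ r, t r = r.val := by
  refine ⟨⟨fun a b h => Subtype.ext h, fun r => ?_⟩, ?_⟩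
  · rw [hH]
    exact Finset.mem_filter.mpr ⟨r.2, le_refl _, le_refl _, Or.inl rfl⟩
  · intro t ht htH r
    by_contra hbad
    obtain ⟨r0, hr0mem, hr0max⟩ := Finset.exists_max_image
      (Finset.univ.filter fun r : {x // x ∈ C} => t r ≠ r.val)
      (fun r => r.val.1 + r.val.2)
      ⟨r, Finset.mem_filter.mpr ⟨Finset.mem_univ _, hbad⟩⟩
    have h0 := htH r0
    rw [hH] at h0
    obtain ⟨hmem, h1, h2, h3⟩ := Finset.mem_filter.mp h0
    have hne : t r0 ≠ r0.val := (Finset.mem_filter.mp hr0mem).2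
    have hne' : ¬((t r0).1 = r0.val.1 ∧ (t r0).2 = r0.val.2) :=
      fun ⟨a, b⟩ => hne (Prod.ext a b)
    have hsum : r0.val.1 + r0.val.2 < (t r0).1 + (t r0).2 := by omega
    set r1 : {x // x ∈ C} := ⟨t r0, hmem⟩ with hr1def
    have hr1 : t r1 = r1.val := by
      by_contra h
      have := hr0max r1 (Finset.mem_filter.mpr ⟨Finset.mem_univ _, h⟩)
      simp only [hr1def] at this
      omega
    have heq : r1 = r0 := ht hr1
    exact hne (congrArg Subtype.val heq)
end

section
/- If $F_1,\dots,F_n$ are subsets of $[n]$ with $|F_1\cup\cdots\cup F_k|=k$ for all $k\in[n]$, and if $j<n$ and $t_j\in F_j$ is an element belonging to no $F_i$ with $i\le j+1$, $i\ne j$, then swapping $F_j$ and $F_{j+1}$ preserves the shelling property: the reordered sequence also has all initial unions of cardinality equal to their length. -/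
open Finset Function

theorem stmt_18 {n : ℕ} (F : Fin n → Finset (Fin n)) (hF : IsShelling F)
    (j : Fin n) (hj : (j : ℕ) + 1 < n) (x : Fin n) (hx : x ∈ F j)
    (hxo : ∀ i : Fin n, (i : ℕ) ≤ (j : ℕ) + 1 → i ≠ j → x ∉ F i) :
    IsShelling (F ∘ Equiv.swap j ⟨(j : ℕ) + 1, hj⟩) := by
  intro k
  set j' : Fin n := ⟨(j : ℕ) + 1, hj⟩ with hj'def
  have hj'val : (j' : ℕ) = (j : ℕ) + 1 := rfl
  by_cases hk : k = j
  · subst hk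
    -- initial union for the swapped family at index j
    have hS : ((Finset.univ.filter fun i => i ≤ k).biUnion (F ∘ Equiv.swap k j'))
        = ((Finset.univ.filter fun i => i < k).biUnion F) ∪ F j' := by
      ext y
      simp only [Finset.mem_biUnion, Finset.mem_filter, Finset.mem_univ, true_and,
        Finset.mem_union, Function.comp_apply]
      constructor
      · rintro ⟨i, hik, hy⟩
        rcases eq_or_ne i k with rfl | hij
        · right; rwa [Equiv.swap_apply_left] at hy
        · left
          have hij' : i ≠ j' := by
            intro h
            have : (i : ℕ) = (k : ℕ) + 1 := by rw [h]
            have hik' : (i : ℕ) ≤ (k : ℕ) := hik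
            omega
          rw [Equiv.swap_apply_of_ne_of_ne hij hij'] at hy
          exact ⟨i, lt_of_le_of_ne hik hij, hy⟩
      · rintro (⟨i, hik, hy⟩ | hy)
        · have hij : i ≠ k := ne_of_lt hik
          have hij' : i ≠ j' := by
            intro h
            have : (i : ℕ) = (k : ℕ) + 1 := by rw [h]
            have hik' : (i : ℕ) < (k : ℕ) := hik
            omega
          exact ⟨i, le_of_lt hik, by rwa [Equiv.swap_apply_of_ne_of_ne hij hij']⟩
        · exact ⟨k, le_refl k, by rwa [Equiv.swap_apply_left]⟩
    set A : Finset (Fin n) := (Finset.univ.filter fun i => i < k).biUnion F with hAdef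
    -- |A| = k
    have hA : A.card = (k : ℕ) := by
      rcases Nat.eq_zero_or_pos (k : ℕ) with hv | hv
      · have : (Finset.univ.filter fun i => i < k) = (∅ : Finset (Fin n)) := by
          ext i
          simp only [Finset.mem_filter, Finset.mem_univ, true_and, Finset.notMem_empty,
            iff_false]
          intro h
          have : (i : ℕ) < (k : ℕ) := h
          omega
        simp [hAdef, this, hv]
      · set kp : Fin n := ⟨(k : ℕ) - 1, by omega⟩ with hkp
        have hfe : (Finset.univ.filter fun i => i < k)
            = (Finset.univ.filter fun i => i ≤ kp) := by
          ext i
          simp only [Finset.mem_filter, Finset.mem_univ, true_and]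
          constructor
          · intro h
            have : (i : ℕ) < (k : ℕ) := h
            show (i : ℕ) ≤ (kp : ℕ)
            simp only [hkp]
            omega
          · intro h
            have h' : (i : ℕ) ≤ (k : ℕ) - 1 := h
            show (i : ℕ) < (k : ℕ)
            omega
        have := hF kp
        rw [hAdef, hfe, this]
        simp only [hkp]
        omega
    -- B = A ∪ F k is the union up to k
    have hBset : (Finset.univ.filter fun i => i ≤ k).biUnion F = A ∪ F k := by
      ext y
      simp only [hAdef, Finset.mem_biUnion, Finset.mem_filter, Finset.mem_univ, true_and,
        Finset.mem_union]
      constructor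
      · rintro ⟨i, hik, hy⟩
        rcases lt_or_eq_of_le hik with h | rfl
        · exact Or.inl ⟨i, h, hy⟩
        · exact Or.inr hy
      · rintro (⟨i, hik, hy⟩ | hy)
        · exact ⟨i, le_of_lt hik, hy⟩
        · exact ⟨k, le_refl k, hy⟩
    have hB : (A ∪ F k).card = (k : ℕ) + 1 := by rw [← hBset]; exact hF k
    -- C = A ∪ F k ∪ F j' is the union up to j'
    have hCset : (Finset.univ.filter fun i => i ≤ j').biUnion F = A ∪ F k ∪ F j' := by
      ext y
      simp only [hAdef, Finset.mem_biUnion, Finset.mem_filter, Finset.mem_univ, true_and,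
        Finset.mem_union]
      constructor
      · rintro ⟨i, hik, hy⟩
        have hik' : (i : ℕ) ≤ (k : ℕ) + 1 := hik
        rcases eq_or_ne i j' with rfl | hij'
        · exact Or.inr hy
        · have : (i : ℕ) ≠ (k : ℕ) + 1 := fun h => hij' (Fin.ext h)
          rcases Nat.lt_or_ge (i : ℕ) (k : ℕ) with h | h
          · exact Or.inl (Or.inl ⟨i, h, hy⟩)
          · have : i = k := Fin.ext (by omega)
            subst this
            exact Or.inl (Or.inr hy)
      · rintro ((⟨i, hik, hy⟩ | hy) | hy)
        · have : (i : ℕ) < (k : ℕ) := hik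
          exact ⟨i, show (i : ℕ) ≤ (k : ℕ) + 1 by omega, hy⟩
        · exact ⟨k, show (k : ℕ) ≤ (k : ℕ) + 1 by omega, hy⟩
        · exact ⟨j', le_refl j', hy⟩
    have hC : (A ∪ F k ∪ F j').card = (k : ℕ) + 2 := by
      rw [← hCset, hF j', hj'val]
    -- x is not in A nor F j'
    have hxA : x ∉ A := by
      rw [hAdef]
      simp only [Finset.mem_biUnion, Finset.mem_filter, Finset.mem_univ, true_and, not_exists,
        not_and]
      intro i hik
      exact hxo i (by have : (i : ℕ) < (k : ℕ) := hik; omega) (ne_of_lt hik)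
    have hxj' : x ∉ F j' := hxo j' (le_of_eq hj'val) (by
      intro h
      have : (j' : ℕ) = (k : ℕ) := by rw [h]
      omega)
    -- F k \ A = {x}
    have hcard1 : (F k \ A).card = 1 := by
      have hd : Disjoint A (F k \ A) := Finset.disjoint_sdiff
      have := Finset.card_union_of_disjoint hd
      rw [Finset.union_sdiff_self_eq_union] at this
      rw [this, hA] at hB
      omega
    have hxFA : x ∈ F k \ A := Finset.mem_sdiff.mpr ⟨hx, hxA⟩
    have hsingle : F k \ A = {x} := by
      obtain ⟨a, ha⟩ := Finset.card_eq_one.mp hcard1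
      rw [ha] at hxFA ⊢
      rw [Finset.mem_singleton] at hxFA
      rw [hxFA]
    set S : Finset (Fin n) := A ∪ F j' with hSdef
    have hxS : x ∉ S := by
      rw [hSdef]
      simp only [Finset.mem_union, not_or]
      exact ⟨hxA, hxj'⟩
    have hxC : x ∈ A ∪ F k ∪ F j' := by
      simp only [Finset.mem_union]
      exact Or.inl (Or.inr hx)
    -- upper bound : S ⊆ C.erase x
    have hupper : S.card ≤ (k : ℕ) + 1 := by
      have hsub : S ⊆ (A ∪ F k ∪ F j').erase x := by
        intro y hy
        rw [Finset.mem_erase]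
        refine ⟨fun h => hxS (h ▸ hy), ?_⟩
        simp only [hSdef, Finset.mem_union] at hy ⊢
        tauto
      have := Finset.card_le_card hsub
      rw [Finset.card_erase_of_mem hxC, hC] at this
      omega
    -- lower bound : C ⊆ insert x S
    have hlower : (k : ℕ) + 1 ≤ S.card := by
      have hsub : A ∪ F k ∪ F j' ⊆ insert x S := by
        intro y hy
        simp only [Finset.mem_union] at hy
        rw [Finset.mem_insert]
        rcases hy with (hy | hy) | hy
        · exact Or.inr (by simp only [hSdef, Finset.mem_union]; exact Or.inl hy)
        · by_cases hyA : y ∈ A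
          · exact Or.inr (by simp only [hSdef, Finset.mem_union]; exact Or.inl hyA)
          · have : y ∈ F k \ A := Finset.mem_sdiff.mpr ⟨hy, hyA⟩
            rw [hsingle, Finset.mem_singleton] at this
            exact Or.inl this
        · exact Or.inr (by simp only [hSdef, Finset.mem_union]; exact Or.inr hy)
      have h1 := Finset.card_le_card hsub
      have h2 := Finset.card_insert_le x S
      rw [hC] at h1
      omega
    rw [hS]
    omega
  · -- k ≠ j : the swap permutes the index set {i : i ≤ k}
    have hkj : (k : ℕ) ≠ (j : ℕ) := fun h => hk (Fin.ext h)
    have hsy : ∀ z : Fin n, Equiv.swap j j' z ≤ k ↔ z ≤ k := by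
      intro z
      rw [Fin.le_def, Fin.le_def]
      rcases eq_or_ne z j with h | hz1
      · rw [h, Equiv.swap_apply_left, hj'val]
        omega
      rcases eq_or_ne z j' with h | hz2
      · rw [h, Equiv.swap_apply_right, hj'val]
        omega
      · rw [Equiv.swap_apply_of_ne_of_ne hz1 hz2]
    have himg : (Finset.univ.filter fun i => i ≤ k).image (Equiv.swap j j')
        = (Finset.univ.filter fun i => i ≤ k) := by
      ext y
      simp only [Finset.mem_image, Finset.mem_filter, Finset.mem_univ, true_and]
      constructor
      · rintro ⟨i, hi, rfl⟩
        exact (hsy i).mpr hi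
      · intro hy
        exact ⟨Equiv.swap j j' y, (hsy y).mpr hy, Equiv.swap_apply_self j j' y⟩
    have : (Finset.univ.filter fun i => i ≤ k).biUnion (F ∘ Equiv.swap j j')
        = (Finset.univ.filter fun i => i ≤ k).biUnion F := by
      conv_rhs => rw [← himg]
      rw [Finset.image_biUnion]
      rfl
    rw [this]
    exact hF k
end
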